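/- arXiv:1902.10878 — 10 statements merged into one kernel-verified Lean document; each statement's English description precedes it below -/
import Mathlib

section
/- Let x, y ∈ (0,1]. Then every graph G that is (x,y)-constrained via a tripartition (A,B,C) contains a vertex v ∈ C with |N²_A(v)| ≥ max(x,y)·|A|. -/
open Set

/-- A set of vertices is stable if no two of its members are adjacent. -/
def StableSet {V : Type*} (G : SimpleGraph V) (S : Set V) : Prop :=
  ∀ u ∈ S, ∀ v ∈ S, ¬ G.Adj u v

/-- A tripartition of a graph `G` is a partition of its vertex set into three
nonempty stable sets. -/
def IsTripartition {V : Type*} (G : SimpleGraph V) (A B C : Set V) : Prop :=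
  A.Nonempty ∧ B.Nonempty ∧ C.Nonempty ∧
  Disjoint A B ∧ Disjoint A C ∧ Disjoint B C ∧
  A ∪ B ∪ C = Set.univ ∧
  StableSet G A ∧ StableSet G B ∧ StableSet G C

/-- The number of neighbours of `v` inside the set `S`. -/
noncomputable def nbrCard {V : Type*} (G : SimpleGraph V) (v : V) (S : Set V) : ℕ :=
  (S ∩ G.neighborSet v).ncard

/-- `G` is `(x,y)`-constrained via the tripartition `(A,B,C)`. -/
def Constrained {V : Type*} (G : SimpleGraph V) (x y : ℝ) (A B C : Set V) : Prop :=
  IsTripartition G A B C ∧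
  (∀ v ∈ A, x * B.ncard ≤ (nbrCard G v B : ℝ)) ∧
  (∀ v ∈ B, y * C.ncard ≤ (nbrCard G v C : ℝ)) ∧
  (∀ u ∈ A, ∀ v ∈ C, ¬ G.Adj u v)

/-- `G` is `(x,y)`-biconstrained via the tripartition `(A,B,C)`. -/
def Biconstrained {V : Type*} (G : SimpleGraph V) (x y : ℝ) (A B C : Set V) : Prop :=
  Constrained G x y A B C ∧
  (∀ v ∈ B, x * A.ncard ≤ (nbrCard G v A : ℝ)) ∧
  (∀ v ∈ C, y * B.ncard ≤ (nbrCard G v B : ℝ))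

/-- `N²(v)`: the set of vertices at distance exactly two from `v`. -/
def N2 {V : Type*} (G : SimpleGraph V) (v : V) : Set V :=
  {u | ¬ G.Adj v u ∧ v ≠ u ∧ ∃ w, G.Adj v w ∧ G.Adj w u}

/-- `|N²(v) ∩ A|`. -/
noncomputable def n2card {V : Type*} (G : SimpleGraph V) (v : V) (A : Set V) : ℕ :=
  (N2 G v ∩ A).ncard

/-!
Both bounds come from the fact that, since `A` and `C` are disjoint and there are no `A`–`C`
edges, every neighbour in `A` of a neighbour `b` of `v ∈ C` lies in `N²(v)`.

If `x ≥ y`, double counting the `A`–`B` edges gives some `b ∈ B` with at least `x|A|`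
neighbours in `A`; as `y > 0`, `b` has a neighbour `v ∈ C`, and `N_A(b) ⊆ N²_A(v)`.

If `y ≥ x`, every `a ∈ A` has a neighbour `b ∈ B` (as `x > 0`), so `a ∈ N²(v)` for the at least
`y|C|` neighbours `v ∈ C` of `b`; double counting the pairs `(a, v)` with `a ∈ N²(v)` gives some
`v ∈ C` with `|N²_A(v)| ≥ y|A|`.
-/

theorem Finset.exists_mul_card_le_card_bipartiteBelow {α β : Type*} {s : Finset α}
    {t : Finset β} (r : α → β → Prop) [∀ a b, Decidable (r a b)] (ht : t.Nonempty) {z : ℝ}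
    (h : ∀ a ∈ s, z * t.card ≤ ((t.bipartiteAbove r a).card : ℝ)) :
    ∃ b ∈ t, z * s.card ≤ ((s.bipartiteBelow r b).card : ℝ) := by
  by_contra! hlt
  have := Finset.card_nsmul_lt_card_nsmul_of_le_of_lt r ht h hlt
  simp only [nsmul_eq_mul] at this
  linarith

theorem Set.exists_mul_ncard_le_ncard_sep {α β : Type*} {s : Set α} {t : Set β}
    (r : α → β → Prop) (hs : s.Finite) (ht : t.Finite) (hne : t.Nonempty) {z : ℝ}
    (h : ∀ a ∈ s, z * t.ncard ≤ ({b ∈ t | r a b}.ncard : ℝ)) :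
    ∃ b ∈ t, z * s.ncard ≤ ({a ∈ s | r a b}.ncard : ℝ) := by
  classical
  lift s to Finset α using hs
  lift t to Finset β using ht
  simp only [← Finset.coe_bipartiteAbove, ← Finset.coe_bipartiteBelow, Set.ncard_coe_finset,
    Finset.mem_coe] at h ⊢
  exact Finset.exists_mul_card_le_card_bipartiteBelow r (Finset.coe_nonempty.mp hne) h

theorem exists_adj_of_mul_ncard_le_nbrCard {V : Type*} [Finite V] {G : SimpleGraph V} {v : V}
    {S : Set V} {z : ℝ} (hz : 0 < z) (hS : S.Nonempty) (h : z * S.ncard ≤ nbrCard G v S) :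
    ∃ u ∈ S, G.Adj v u := by
  have hS' : (0 : ℝ) < S.ncard := mod_cast (Set.ncard_pos S.toFinite).mpr hS
  have hpos : 0 < nbrCard G v S := mod_cast (mul_pos hz hS').trans_le h
  exact (Set.ncard_pos (Set.toFinite _)).mp hpos

namespace Constrained

variable {V : Type*} {G : SimpleGraph V} {x y : ℝ} {A B C : Set V}

theorem mem_N2 (hG : Constrained G x y A B C) {v b a : V} (hv : v ∈ C) (ha : a ∈ A)
    (hvb : G.Adj v b) (hba : G.Adj b a) : a ∈ N2 G v := by
  obtain ⟨⟨-, -, -, -, hAC, -⟩, -, -, hnoAC⟩ := hG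
  exact ⟨fun hva => hnoAC a ha v hv hva.symm, fun hva => hAC.ne_of_mem ha hv hva.symm,
    b, hvb, hba⟩

variable [Finite V]

theorem exists_x_mul_ncard_le_n2card (hG : Constrained G x y A B C) (hy : 0 < y) :
    ∃ v ∈ C, x * A.ncard ≤ (n2card G v A : ℝ) := by
  have ⟨⟨_, hBne, hCne, _⟩, hAB, hBC, _⟩ := hG
  obtain ⟨b, hb, hAb⟩ := Set.exists_mul_ncard_le_ncard_sep (fun a b => G.Adj a b)
    A.toFinite B.toFinite hBne hAB
  obtain ⟨v, hv, hbv⟩ := exists_adj_of_mul_ncard_le_nbrCard hy hCne (hBC b hb)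
  have hsub : {a ∈ A | G.Adj a b} ⊆ N2 G v ∩ A :=
    fun a ⟨ha, hab⟩ => ⟨hG.mem_N2 hv ha hbv.symm hab.symm, ha⟩
  exact ⟨v, hv, hAb.trans (mod_cast Set.ncard_le_ncard hsub (Set.toFinite _))⟩

theorem exists_y_mul_ncard_le_n2card (hG : Constrained G x y A B C) (hx : 0 < x) :
    ∃ v ∈ C, y * A.ncard ≤ (n2card G v A : ℝ) := by
  have ⟨⟨_, hBne, hCne, _⟩, hAB, hBC, _⟩ := hG
  have hA : ∀ a ∈ A, y * C.ncard ≤ ({v ∈ C | a ∈ N2 G v}.ncard : ℝ) := by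
    intro a ha
    obtain ⟨b, hb, hab⟩ := exists_adj_of_mul_ncard_le_nbrCard hx hBne (hAB a ha)
    have hsub : C ∩ G.neighborSet b ⊆ {v ∈ C | a ∈ N2 G v} :=
      fun v ⟨hv, hbv⟩ => ⟨hv, hG.mem_N2 hv ha (G.adj_symm hbv) hab.symm⟩
    exact (hBC b hb).trans (mod_cast Set.ncard_le_ncard hsub (Set.toFinite _))
  obtain ⟨v, hv, hCv⟩ := Set.exists_mul_ncard_le_ncard_sep (fun a v => a ∈ N2 G v)
    A.toFinite C.toFinite hCne hA
  exact ⟨v, hv, hCv.trans_eq (by rw [n2card, Set.inter_comm]; rfl)⟩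

end Constrained

theorem stmt_1 (x y : ℝ) (hx : x ∈ Set.Ioc (0:ℝ) 1) (hy : y ∈ Set.Ioc (0:ℝ) 1)
    {V : Type} [Fintype V] (G : SimpleGraph V) (A B C : Set V)
    (hG : Constrained G x y A B C) :
    ∃ v ∈ C, max x y * A.ncard ≤ (n2card G v A : ℝ) := by
  rcases le_total y x with hyx | hxy
  · rw [max_eq_left hyx]
    exact hG.exists_x_mul_ncard_le_n2card hy.1
  · rw [max_eq_right hxy]
    exact hG.exists_y_mul_ncard_le_n2card hx.1
end

section
/- For every integer k ≥ 1 and all x, y ∈ (0,1], there exists a graph G that is (x,y)-constrained via a tripartition (A,B,C) with |A| = |B| = |C| = k, such that |N²_A(v)| ≤ ⌈kx⌉ + ⌈ky⌉ − 1 for every vertex v ∈ C. -/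
/-!
Take three copies `A`, `B`, `C` of the cycle `ℤ/k`, join `i ∈ A` to the `a = ⌈kx⌉` vertices
`i, i+1, …, i+a-1` of `B`, and `j ∈ B` to the `b = ⌈ky⌉` vertices `j, …, j+b-1` of `C`.
Every vertex of `A` has `a ≥ x|B|` neighbours in `B`, every vertex of `B` has `b ≥ y|C|`
neighbours in `C`, and along a path `l — j — i` from `C` to `A` the offset
`l - i = (l - j) + (j - i)` lies in `{0, …, a+b-2}`, so at most `a+b-1` vertices of `A`
are at distance two from `l`.
-/

open Set

theorem ZMod.ncard_val_lt (k m : ℕ) [NeZero k] : {d : ZMod k | d.val < m}.ncard = min m k := by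
  have : ZMod.val '' {d : ZMod k | d.val < m} = Iio (min m k) := by
    ext n
    simp only [mem_image, mem_ofPred_eq, mem_Iio, lt_min_iff]
    constructor
    · rintro ⟨d, hd, rfl⟩
      exact ⟨hd, d.val_lt⟩
    · rintro ⟨hm, hk⟩
      exact ⟨n, by rwa [ZMod.val_natCast_of_lt hk], ZMod.val_natCast_of_lt hk⟩
  rw [← ncard_image_of_injective _ (ZMod.val_injective k), this, ncard_Iio_nat]

theorem ZMod.ncard_sub_val_lt (k m : ℕ) [NeZero k] (c : ZMod k) :
    {j : ZMod k | (j - c).val < m}.ncard = min m k :=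
  (ncard_preimage_of_injective_subset_range (Equiv.subRight c).injective
    (by simp [(Equiv.subRight c).surjective.range_eq])).trans (ZMod.ncard_val_lt k m)

theorem ZMod.ncard_val_sub_lt (k m : ℕ) [NeZero k] (c : ZMod k) :
    {j : ZMod k | (c - j).val < m}.ncard = min m k :=
  (ncard_preimage_of_injective_subset_range (Equiv.subLeft c).injective
    (by simp [(Equiv.subLeft c).surjective.range_eq])).trans (ZMod.ncard_val_lt k m)

lemma mul_le_min_natCeil_mul {z : ℝ} (k : ℕ) (hz : z ≤ 1) :
    z * k ≤ (min ⌈(k : ℝ) * z⌉₊ k : ℕ) := by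
  rw [Nat.cast_min, le_min_iff, mul_comm]
  exact ⟨Nat.le_ceil _, mul_le_of_le_one_right (Nat.cast_nonneg k) hz⟩

@[simp]
def layeredCirculantRel (k a b : ℕ) : ZMod k ⊕ ZMod k ⊕ ZMod k → ZMod k ⊕ ZMod k ⊕ ZMod k → Prop
  | .inl i, .inr (.inl j) => (j - i).val < a
  | .inr (.inl j), .inr (.inr l) => (l - j).val < b
  | _, _ => False

def layeredCirculant (k a b : ℕ) : SimpleGraph (ZMod k ⊕ ZMod k ⊕ ZMod k) :=
  .fromRel (layeredCirculantRel k a b)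

namespace layeredCirculant

variable {k a b : ℕ}

@[simp] lemma adj_iff {u v : ZMod k ⊕ ZMod k ⊕ ZMod k} :
    (layeredCirculant k a b).Adj u v ↔
      u ≠ v ∧ (layeredCirculantRel k a b u v ∨ layeredCirculantRel k a b v u) :=
  SimpleGraph.fromRel_adj _ _ _

section Parts

variable (k)

def partA : Set (ZMod k ⊕ ZMod k ⊕ ZMod k) := range Sum.inl

def partB : Set (ZMod k ⊕ ZMod k ⊕ ZMod k) := range (Sum.inr ∘ Sum.inl)

def partC : Set (ZMod k ⊕ ZMod k ⊕ ZMod k) := range (Sum.inr ∘ Sum.inr)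

lemma ncard_partA : (partA k).ncard = k :=
  (ncard_range_of_injective Sum.inl_injective).trans (Nat.card_zmod k)

lemma ncard_partB : (partB k).ncard = k :=
  (ncard_range_of_injective (Sum.inr_injective.comp Sum.inl_injective)).trans (Nat.card_zmod k)

lemma ncard_partC : (partC k).ncard = k :=
  (ncard_range_of_injective (Sum.inr_injective.comp Sum.inr_injective)).trans (Nat.card_zmod k)

end Parts

lemma isTripartition : IsTripartition (layeredCirculant k a b) (partA k) (partB k) (partC k) := by
  have cover : partA k ∪ partB k ∪ partC k = univ := by
    ext (i | j | l) <;> simp [partA, partB, partC]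
  refine ⟨range_nonempty _, range_nonempty _, range_nonempty _, ?_, ?_, ?_, cover, ?_, ?_, ?_⟩ <;>
    simp [partA, partB, partC, disjoint_left, StableSet]

lemma not_adj_partA_partC :
    ∀ u ∈ partA k, ∀ v ∈ partC k, ¬ (layeredCirculant k a b).Adj u v := by
  simp [partA, partC]

lemma partB_inter_neighborSet (i : ZMod k) :
    partB k ∩ (layeredCirculant k a b).neighborSet (.inl i) =
      (Sum.inr ∘ Sum.inl) '' {j | (j - i).val < a} := by
  ext (_ | j | _) <;> simp [partB]

lemma partC_inter_neighborSet (j : ZMod k) :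
    partC k ∩ (layeredCirculant k a b).neighborSet (.inr (.inl j)) =
      (Sum.inr ∘ Sum.inr) '' {l | (l - j).val < b} := by
  ext (_ | _ | l) <;> simp [partC]

lemma N2_inter_partA_subset (l : ZMod k) :
    N2 (layeredCirculant k a b) (.inr (.inr l)) ∩ partA k ⊆
      Sum.inl '' {i | (l - i).val < a + b - 1} := by
  rintro _ ⟨⟨-, -, w, hlw, hwi⟩, i, rfl⟩
  rcases w with _ | j | _
  · simp at hlw
  · have hlj : (l - j).val < b := by simpa using hlw
    have hji : (j - i).val < a := by simpa using hwi
    have hli : (l - i).val ≤ (l - j).val + (j - i).val := by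
      simpa only [sub_add_sub_cancel] using ZMod.val_add_le (l - j) (j - i)
    exact ⟨i, by simp only [mem_ofPred_eq]; omega, rfl⟩
  · simp at hwi

variable [NeZero k] {v : ZMod k ⊕ ZMod k ⊕ ZMod k}

lemma nbrCard_partB_of_mem_partA (hv : v ∈ partA k) :
    nbrCard (layeredCirculant k a b) v (partB k) = min a k := by
  obtain ⟨i, rfl⟩ := hv
  rw [nbrCard, partB_inter_neighborSet, ncard_image_of_injective _
    (Sum.inr_injective.comp Sum.inl_injective), ZMod.ncard_sub_val_lt]

lemma nbrCard_partC_of_mem_partB (hv : v ∈ partB k) :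
    nbrCard (layeredCirculant k a b) v (partC k) = min b k := by
  obtain ⟨j, rfl⟩ := hv
  rw [nbrCard, Function.comp_apply, partC_inter_neighborSet, ncard_image_of_injective _
    (Sum.inr_injective.comp Sum.inr_injective), ZMod.ncard_sub_val_lt]

lemma n2card_partA_le_of_mem_partC (hv : v ∈ partC k) :
    n2card (layeredCirculant k a b) v (partA k) ≤ a + b - 1 := by
  obtain ⟨l, rfl⟩ := hv
  calc (N2 (layeredCirculant k a b) (.inr (.inr l)) ∩ partA k).ncard
      ≤ (Sum.inl '' {i | (l - i).val < a + b - 1} : Set (ZMod k ⊕ ZMod k ⊕ ZMod k)).ncard :=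
        ncard_le_ncard (N2_inter_partA_subset l) (toFinite _)
    _ = min (a + b - 1) k := by
        rw [ncard_image_of_injective _ Sum.inl_injective, ZMod.ncard_val_sub_lt]
    _ ≤ a + b - 1 := min_le_left _ _

theorem constrained {x y : ℝ} (hx : x * k ≤ (min a k : ℕ)) (hy : y * k ≤ (min b k : ℕ)) :
    Constrained (layeredCirculant k a b) x y (partA k) (partB k) (partC k) := by
  refine ⟨isTripartition, fun v hv => ?_, fun v hv => ?_, not_adj_partA_partC⟩
  · rwa [nbrCard_partB_of_mem_partA hv, ncard_partB]
  · rwa [nbrCard_partC_of_mem_partB hv, ncard_partC]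

end layeredCirculant

open layeredCirculant in
theorem stmt_2 (k : ℕ) (hk : 1 ≤ k) (x y : ℝ)
    (hx : x ∈ Set.Ioc (0:ℝ) 1) (hy : y ∈ Set.Ioc (0:ℝ) 1) :
    ∃ (V : Type) (_ : Fintype V) (G : SimpleGraph V) (A B C : Set V),
      Constrained G x y A B C ∧ A.ncard = k ∧ B.ncard = k ∧ C.ncard = k ∧
      ∀ v ∈ C, (n2card G v A : ℤ) ≤ ⌈(k : ℝ) * x⌉ + ⌈(k : ℝ) * y⌉ - 1 := by
  have : NeZero k := ⟨by omega⟩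
  have hkx : 0 < (k : ℝ) * x := mul_pos (by positivity) hx.1
  have hky : 0 < (k : ℝ) * y := mul_pos (by positivity) hy.1
  set a := ⌈(k : ℝ) * x⌉₊
  set b := ⌈(k : ℝ) * y⌉₊
  have ha_pos : 0 < a := Nat.ceil_pos.2 hkx
  have hb_pos : 0 < b := Nat.ceil_pos.2 hky
  have ha_int : (a : ℤ) = ⌈(k : ℝ) * x⌉ := Int.natCast_ceil_eq_ceil hkx.le
  have hb_int : (b : ℤ) = ⌈(k : ℝ) * y⌉ := Int.natCast_ceil_eq_ceil hky.le
  refine ⟨_, inferInstance, layeredCirculant k a b, partA k, partB k, partC k,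
    constrained (mul_le_min_natCeil_mul k hx.2) (mul_le_min_natCeil_mul k hy.2),
    ncard_partA k, ncard_partB k, ncard_partC k, fun v hv => ?_⟩
  have := n2card_partA_le_of_mem_partC (a := a) (b := b) hv
  omega
end

section
/- Let G be a graph with a bipartition (A,B), where A and B are nonempty, and let w : B → ℝ≥0 be a function with w(B) = 1. Then either (i) there is a function w' : B → ℝ≥0 such that w'(B) = 1, w'(A→B) ≥ w(A→B), and w'(v) = 0 for some v ∈ B; or (ii) there is a function f : A → ℝ≥0 such that f(A) = 1 and f(B→A) ≥ w(A→B). -/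
open Set

/-- The weight of a set of vertices. -/
noncomputable def wsum {V : Type*} (w : V → ℝ) (S : Set V) : ℝ := ∑ᶠ v ∈ S, w v

/-- A bipartition of a graph `G` is a partition of its vertex set into two stable sets. -/
def IsBipartition {V : Type*} (G : SimpleGraph V) (A B : Set V) : Prop :=
  Disjoint A B ∧ A ∪ B = Set.univ ∧ StableSet G A ∧ StableSet G B

/-- `w(A → B)`: the minimum over `u ∈ A` of the `w`-weight of `N(u) ∩ B`
(`0` if `A` is empty, which is the convention of `Real.sInf`). -/
noncomputable def arrowMin {V : Type*} (G : SimpleGraph V) (w : V → ℝ) (A B : Set V) : ℝ :=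
  sInf ((fun u => wsum w (G.neighborSet u ∩ B)) '' A)


/-!
Let `t = w(A→B)`. Von Neumann's minimax theorem, applied to the adjacency bilinear form on
probability vectors supported on `B` and on `A`, gives a saddle point `(μ, f)`. If
`f(B→A) ≥ t` we are in case (ii). Otherwise some `v ∈ B` has `f(N(v)) < t`, and the saddle
point inequality turns this into `μ(N(u)) < t` for every `u ∈ A`. Pushing `w` away from `μ`,
to `w + s (w - μ)`, then keeps the total weight `1` and does not decrease `w(A→B)`; the
largest `s` keeping all weights nonnegative makes one of them vanish, which is case (i).
-/

theorem LinearMap.exists_saddlePoint {E F : Type*}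
    [AddCommGroup E] [Module ℝ E] [TopologicalSpace E] [IsTopologicalAddGroup E]
    [ContinuousSMul ℝ E] [T2Space E] [FiniteDimensional ℝ E]
    [AddCommGroup F] [Module ℝ F] [TopologicalSpace F] [IsTopologicalAddGroup F]
    [ContinuousSMul ℝ F] [T2Space F] [FiniteDimensional ℝ F]
    (L : E →ₗ[ℝ] F →ₗ[ℝ] ℝ) {X : Set E} {Y : Set F}
    (hX : X.Nonempty) (hXc : Convex ℝ X) (hXk : IsCompact X)
    (hY : Y.Nonempty) (hYc : Convex ℝ Y) (hYk : IsCompact Y) :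
    ∃ a ∈ X, ∃ b ∈ Y, ∀ x ∈ X, ∀ y ∈ Y, L a y ≤ L x b :=
  Sion.exists_isSaddlePointOn hX hXc hXk
    (fun y _ => (L.flip y).continuous_of_finiteDimensional.continuousOn.lowerSemicontinuousOn)
    (fun y _ => ((L.flip y).convexOn hXc).quasiconvexOn) hYc hY hYk
    (fun x _ => (L x).continuous_of_finiteDimensional.continuousOn.upperSemicontinuousOn)
    (fun x _ => ((L x).concaveOn hYc).quasiconcaveOn)

section Weights

variable {V : Type*}

lemma wsum_inter_eq_of_eq_zero {f : V → ℝ} {S : Set V} (hf : ∀ v ∉ S, f v = 0) (T : Set V) :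
    wsum f (T ∩ S) = wsum f T := by
  refine finsum_mem_inter_support_eq f _ _ ?_
  rw [Set.inter_assoc, Set.inter_eq_right.2 (Function.support_subset_iff'.2 hf)]

variable [Finite V]

lemma wsum_eq_sum_toFinset (f : V → ℝ) (S : Set V) :
    wsum f S = ∑ v ∈ S.toFinite.toFinset, f v :=
  finsum_mem_eq_finite_toFinset_sum f S.toFinite

lemma wsum_add_mul_sub (w μ : V → ℝ) (s : ℝ) (S : Set V) :
    wsum (fun v => w v + s * (w v - μ v)) S = wsum w S + s * (wsum w S - wsum μ S) := by
  simp only [wsum_eq_sum_toFinset, Finset.sum_add_distrib, ← Finset.mul_sum,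
    Finset.sum_sub_distrib]

lemma wsum_lt_wsum {f g : V → ℝ} {S : Set V} (hle : ∀ v ∈ S, f v ≤ g v)
    (hlt : ∃ v ∈ S, f v < g v) : wsum f S < wsum g S := by
  simp only [wsum_eq_sum_toFinset]
  obtain ⟨v, hv, hfg⟩ := hlt
  exact Finset.sum_lt_sum (fun x hx => hle x (by simpa using hx)) ⟨v, by simpa using hv, hfg⟩

lemma exists_lt_of_wsum_lt {f g : V → ℝ} {S : Set V} (h : wsum f S < wsum g S) :
    ∃ v ∈ S, f v < g v := by
  simp only [wsum_eq_sum_toFinset] at h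
  obtain ⟨v, hv, hfg⟩ := Finset.exists_lt_of_sum_lt h
  exact ⟨v, by simpa using hv, hfg⟩

end Weights

section ArrowMin

variable {V : Type*} (G : SimpleGraph V) (w : V → ℝ) {A : Set V} (B : Set V)

lemma arrowMin_le [Finite V] {u : V} (hu : u ∈ A) :
    arrowMin G w A B ≤ wsum w (G.neighborSet u ∩ B) :=
  csInf_le (A.toFinite.image _).bddBelow ⟨u, hu, rfl⟩

lemma le_arrowMin (hA : A.Nonempty) {c : ℝ} (h : ∀ u ∈ A, c ≤ wsum w (G.neighborSet u ∩ B)) :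
    c ≤ arrowMin G w A B :=
  le_csInf (hA.image _) (Set.forall_mem_image.2 h)

end ArrowMin

def stdSimplexOn {V : Type*} [Fintype V] (S : Set V) : Set (V → ℝ) :=
  stdSimplex ℝ V ∩ Sᶜ.pi fun _ => {0}

section StdSimplexOn

variable {V : Type*} [Fintype V] {S : Set V} {μ : V → ℝ}

lemma isCompact_stdSimplexOn : IsCompact (stdSimplexOn S) :=
  (isCompact_stdSimplex ℝ V).inter_right (isClosed_set_pi fun _ _ => isClosed_singleton)

lemma convex_stdSimplexOn : Convex ℝ (stdSimplexOn S) :=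
  (convex_stdSimplex ℝ V).inter (convex_pi fun _ _ => convex_singleton 0)

lemma single_mem_stdSimplexOn [DecidableEq V] {v : V} (hv : v ∈ S) :
    Pi.single v 1 ∈ stdSimplexOn S :=
  ⟨single_mem_stdSimplex ℝ v, fun _ hu => Pi.single_eq_of_ne (ne_of_mem_of_not_mem hv hu).symm 1⟩

lemma nonempty_stdSimplexOn (hS : S.Nonempty) : (stdSimplexOn S).Nonempty := by
  classical
  obtain ⟨v, hv⟩ := hS
  exact ⟨_, single_mem_stdSimplexOn hv⟩

lemma wsum_eq_one_of_mem_stdSimplexOn (hμ : μ ∈ stdSimplexOn S) : wsum μ S = 1 := by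
  rw [← Set.univ_inter S, wsum_inter_eq_of_eq_zero hμ.2, wsum,
    finsum_mem_univ, finsum_eq_sum_of_fintype, hμ.1.2]

end StdSimplexOn

section AdjacencyForm

variable {V : Type*} [Fintype V] (G : SimpleGraph V) [DecidableRel G.Adj]

lemma sum_neighborFinset_eq_wsum {S : Set V} {f : V → ℝ} (hf : ∀ v ∉ S, f v = 0) (v : V) :
    ∑ u ∈ G.neighborFinset v, f u = wsum f (G.neighborSet v ∩ S) := by
  rw [wsum_inter_eq_of_eq_zero hf, wsum, ← finsum_mem_coe_finset, G.coe_neighborFinset]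

lemma toBilin'_adjMatrix_single_left [DecidableEq V] (v : V) (f : V → ℝ) :
    Matrix.toBilin' (G.adjMatrix ℝ) (Pi.single v 1) f = ∑ u ∈ G.neighborFinset v, f u := by
  rw [Matrix.toBilin'_apply', single_dotProduct, one_mul,
    SimpleGraph.adjMatrix_mulVec_apply]

lemma toBilin'_adjMatrix_single_right [DecidableEq V] (μ : V → ℝ) (u : V) :
    Matrix.toBilin' (G.adjMatrix ℝ) μ (Pi.single u 1) = ∑ v ∈ G.neighborFinset u, μ v := by
  rw [Matrix.toBilin'_apply', Matrix.dotProduct_mulVec, dotProduct_single, mul_one,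
    SimpleGraph.adjMatrix_vecMul_apply]

end AdjacencyForm

lemma exists_extrapolation_nonneg_eq_zero {V : Type*} [Finite V] {w μ : V → ℝ}
    (hw : ∀ v, 0 ≤ w v) (hlt : ∃ v, w v < μ v) :
    ∃ s : ℝ, 0 ≤ s ∧ (∀ v, 0 ≤ w v + s * (w v - μ v)) ∧
      ∃ v, w v < μ v ∧ w v + s * (w v - μ v) = 0 := by
  obtain ⟨v₀, hv₀, hmin⟩ := Set.exists_min_image {v | w v < μ v} (fun v => w v / (μ v - w v))
    (Set.toFinite _) hlt
  have hd₀ : 0 < μ v₀ - w v₀ := sub_pos.2 hv₀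
  refine ⟨w v₀ / (μ v₀ - w v₀), div_nonneg (hw v₀) hd₀.le, fun v => ?_, v₀, hv₀, ?_⟩
  · rcases lt_or_ge (w v) (μ v) with hv | hv
    · have hd : 0 < μ v - w v := sub_pos.2 hv
      have := (le_div_iff₀ hd).1 (hmin v hv)
      linarith
    · have := mul_nonneg (div_nonneg (hw v₀) hd₀.le) (sub_nonneg.2 hv)
      linarith [hw v]
  · field_simp
    ring

section Rebalance

variable {V : Type*} [Finite V] {G : SimpleGraph V} {A B : Set V} {w μ : V → ℝ}

lemma exists_lt_of_forall_wsum_lt_arrowMin (hA : A.Nonempty) (hsum : wsum μ B = wsum w B)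
    (hlt : ∀ u ∈ A, wsum μ (G.neighborSet u ∩ B) < arrowMin G w A B) :
    ∃ v ∈ B, w v < μ v := by
  by_contra! hle
  obtain ⟨u, hu⟩ := hA
  obtain ⟨v, hv, hμw⟩ := exists_lt_of_wsum_lt ((hlt u hu).trans_le (arrowMin_le G w B hu))
  exact (wsum_lt_wsum hle ⟨v, hv.2, hμw⟩).ne hsum

lemma arrowMin_le_arrowMin_extrapolation (hA : A.Nonempty) {s : ℝ} (hs : 0 ≤ s)
    (hμ : ∀ u ∈ A, wsum μ (G.neighborSet u ∩ B) ≤ arrowMin G w A B) :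
    arrowMin G w A B ≤ arrowMin G (fun v => w v + s * (w v - μ v)) A B := by
  refine le_arrowMin G _ B hA fun u hu => ?_
  rw [wsum_add_mul_sub]
  nlinarith [arrowMin_le G w B hu, hμ u hu]

end Rebalance

lemma exists_vanishing_of_forall_wsum_lt_arrowMin {V : Type*} [Fintype V] {G : SimpleGraph V}
    {A B : Set V} (hA : A.Nonempty) {w μ : V → ℝ} (hw : ∀ v, 0 ≤ w v) (hw1 : wsum w B = 1)
    (hμ : μ ∈ stdSimplexOn B) (hlt : ∀ u ∈ A, wsum μ (G.neighborSet u ∩ B) < arrowMin G w A B) :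
    ∃ w' : V → ℝ, (∀ v, 0 ≤ w' v) ∧ wsum w' B = 1 ∧
        arrowMin G w A B ≤ arrowMin G w' A B ∧ ∃ v ∈ B, w' v = 0 := by
  have hμ1 := wsum_eq_one_of_mem_stdSimplexOn hμ
  obtain ⟨v, hvB, hv⟩ := exists_lt_of_forall_wsum_lt_arrowMin hA (hμ1.trans hw1.symm) hlt
  obtain ⟨s, hs, hnonneg, v₀, hv₀, hzero⟩ := exists_extrapolation_nonneg_eq_zero hw ⟨v, hv⟩
  have hv₀B : v₀ ∈ B := by_contra fun h => (hv₀.trans_eq (hμ.2 v₀ h)).not_ge (hw v₀)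
  refine ⟨_, hnonneg, ?_, arrowMin_le_arrowMin_extrapolation hA hs fun u hu => (hlt u hu).le,
    v₀, hv₀B, hzero⟩
  rw [wsum_add_mul_sub, hw1, hμ1, sub_self, mul_zero, add_zero]

theorem stmt_4_general {V : Type} [Fintype V] (G : SimpleGraph V) (A B : Set V)
    (hA : A.Nonempty) (hB : B.Nonempty)
    (w : V → ℝ) (hw : ∀ v, 0 ≤ w v) (hw1 : wsum w B = 1) :
    (∃ w' : V → ℝ, (∀ v, 0 ≤ w' v) ∧ wsum w' B = 1 ∧
        arrowMin G w A B ≤ arrowMin G w' A B ∧ ∃ v ∈ B, w' v = 0) ∨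
    (∃ f : V → ℝ, (∀ v, 0 ≤ f v) ∧ wsum f A = 1 ∧
        arrowMin G w A B ≤ arrowMin G f B A) := by
  classical
  obtain ⟨μ, hμ, f, hf, hsaddle⟩ := (Matrix.toBilin' (G.adjMatrix ℝ)).exists_saddlePoint
    (nonempty_stdSimplexOn hB) convex_stdSimplexOn isCompact_stdSimplexOn
    (nonempty_stdSimplexOn hA) convex_stdSimplexOn isCompact_stdSimplexOn
  by_cases hf_good : ∀ v ∈ B, arrowMin G w A B ≤ wsum f (G.neighborSet v ∩ A)
  · exact Or.inr ⟨f, hf.1.1, wsum_eq_one_of_mem_stdSimplexOn hf, le_arrowMin G f A hB hf_good⟩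
  push Not at hf_good
  obtain ⟨v, hvB, hv⟩ := hf_good
  refine Or.inl (exists_vanishing_of_forall_wsum_lt_arrowMin hA hw hw1 hμ fun u hu => ?_)
  calc wsum μ (G.neighborSet u ∩ B)
      = Matrix.toBilin' (G.adjMatrix ℝ) μ (Pi.single u 1) := by
        rw [toBilin'_adjMatrix_single_right, sum_neighborFinset_eq_wsum G hμ.2]
    _ ≤ Matrix.toBilin' (G.adjMatrix ℝ) (Pi.single v 1) f :=
        hsaddle _ (single_mem_stdSimplexOn hvB) _ (single_mem_stdSimplexOn hu)
    _ = wsum f (G.neighborSet v ∩ A) := by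
        rw [toBilin'_adjMatrix_single_left, sum_neighborFinset_eq_wsum G hf.2]
    _ < arrowMin G w A B := hv

theorem stmt_4 {V : Type} [Fintype V] (G : SimpleGraph V) (A B : Set V)
    (hbip : IsBipartition G A B) (hA : A.Nonempty) (hB : B.Nonempty)
    (w : V → ℝ) (hw : ∀ v, 0 ≤ w v) (hw1 : wsum w B = 1) :
    (∃ w' : V → ℝ, (∀ v, 0 ≤ w' v) ∧ wsum w' B = 1 ∧
        arrowMin G w A B ≤ arrowMin G w' A B ∧ ∃ v ∈ B, w' v = 0) ∨
    (∃ f : V → ℝ, (∀ v, 0 ≤ f v) ∧ wsum f A = 1 ∧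
        arrowMin G w A B ≤ arrowMin G f B A) :=
  stmt_4_general G A B hA hB w hw hw1
end

section
/- Let k ≥ 0 be an integer, and let x, y ∈ (0,1] with kx < 1 and ky < 1 satisfy x/(1−kx) + y/(1−ky) ≤ 1, with strict inequality if x or y is irrational. Then there exists a graph G that is (x,y)-constrained via a tripartition (A,B,C) such that |N²_A(v)| < |A|/(k+1) for every vertex v ∈ C. (Equivalently, φ(x,y) < 1/(k+1).) -/
open Set

/-!
Put `u = x / (1 - k x)`, `v = y / (1 - k y)` and choose a rational `a / (a + e)` in `[u, 1 - v]`
(if `u + v = 1` then `x` is rational, hence so is `u`); this amounts to `x (k a + a + e) ≤ a` and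
`y (k e + a + e) ≤ e`.
The graph is the disjoint union of `k` hubs, complete tripartite graphs with parts of sizes
`a + e - 1`, `a` and `e`, and one cyclic component with parts `ℤ/(a + e)`, where `A_j ~ B_t` iff
`t - j ∈ [0, a)` and `B_t ~ C_j` iff `t - j ∈ [a, a + e)`. Every vertex of `A` has `a`
neighbours in `B` and every vertex of `B` has `e` neighbours in `C`. Since `A_j` and `C_j` have no
common neighbour, a vertex of `C` reaches at most `a + e - 1` vertices of `A` in two steps, which
is less than `|A| / (k + 1) = (k (a + e - 1) + a + e) / (k + 1)`.
-/

lemma mul_add_le_of_div_one_sub_mul_le {k x a n : ℝ} (hkx : k * x < 1) (hn : 0 < n)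
    (h : x / (1 - k * x) ≤ a / n) : x * (k * a + n) ≤ a := by
  rw [div_le_div_iff₀ (by linarith) hn] at h
  linarith

lemma exists_rat_mem_Icc_of_le {u w : ℝ} (h : u ≤ w)
    (hrat : u < w ∨ ∃ q : ℚ, (q : ℝ) = u) : ∃ q : ℚ, u ≤ q ∧ (q : ℝ) ≤ w := by
  rcases hrat with hlt | ⟨q, rfl⟩
  · obtain ⟨q, hu, hw⟩ := exists_rat_btwn hlt
    exact ⟨q, hu.le, hw.le⟩
  · exact ⟨q, le_rfl, h⟩

lemma Rat.exists_cast_eq_div_add {q : ℚ} (h₀ : 0 ≤ q) (h₁ : q ≤ 1) :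
    ∃ a e : ℕ, 0 < a + e ∧ (q : ℝ) = a / (a + e) := by
  have hnum : (q.num.toNat : ℤ) = q.num := Int.toNat_of_nonneg (Rat.num_nonneg.2 h₀)
  have hle : q.num.toNat ≤ q.den := by
    have := Rat.num_le_denom_iff.2 h₁
    omega
  refine ⟨q.num.toNat, q.den - q.num.toNat, by have := q.den_pos; omega, ?_⟩
  rw [← Nat.cast_add, Nat.add_sub_cancel' hle, Rat.cast_def]
  congr 1
  exact_mod_cast hnum.symm

section FinCount

open Finset

variable {n a : ℕ} [NeZero n]

lemma Fin.card_filter_sub_val_lt (ha : a ≤ n) (j : Fin n) : #{t | (t - j).val < a} = a := by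
  rw [card_filter, ← Equiv.sum_comp (Equiv.addRight j)]
  simp [Fin.card_filter_val_lt, ha]

lemma Fin.card_filter_le_sub_val (ha : a ≤ n) (t : Fin n) : #{j | a ≤ (t - j).val} = n - a := by
  simp_rw [← not_lt]
  rw [filter_not, card_sdiff_of_subset (filter_subset _ _), card_filter,
    ← Equiv.sum_comp (Equiv.subLeft t)]
  simp [Fin.card_filter_val_lt, ha]

end FinCount

local notation "layerA" => Set.range Sum.inl
local notation "layerB" => Set.range (Sum.inr ∘ Sum.inl)
local notation "layerC" => Set.range (Sum.inr ∘ Sum.inr)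

section ThreeLayer

variable {α β γ : Type*} {r : α → β → Prop} {s : β → γ → Prop}

variable (r s) in
def threeLayerRel : α ⊕ β ⊕ γ → α ⊕ β ⊕ γ → Prop
  | .inl a, .inr (.inl b) => r a b
  | .inr (.inl b), .inr (.inr c) => s b c
  | _, _ => False

variable (r s) in
def threeLayerGraph : SimpleGraph (α ⊕ β ⊕ γ) := SimpleGraph.fromRel (threeLayerRel r s)

lemma isTripartition_threeLayerGraph [Nonempty α] [Nonempty β] [Nonempty γ] :
    IsTripartition (threeLayerGraph r s) layerA layerB layerC := by
  refine ⟨Set.range_nonempty _, Set.range_nonempty _, Set.range_nonempty _,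
    ?_, ?_, ?_, ?_, ?_, ?_, ?_⟩
  · exact Set.disjoint_left.2 (by rintro _ ⟨_, rfl⟩ ⟨_, h⟩; simp at h)
  · exact Set.disjoint_left.2 (by rintro _ ⟨_, rfl⟩ ⟨_, h⟩; simp at h)
  · exact Set.disjoint_left.2 (by rintro _ ⟨_, rfl⟩ ⟨_, h⟩; simp at h)
  · ext (_ | _ | _) <;> simp
  all_goals rintro _ ⟨_, rfl⟩ _ ⟨_, rfl⟩; simp [threeLayerGraph, threeLayerRel]

lemma nbrCard_threeLayerGraph_inl (a : α) :
    nbrCard (threeLayerGraph r s) (.inl a) layerB = {b | r a b}.ncard := by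
  have : layerB ∩ (threeLayerGraph r s).neighborSet (.inl a) =
      (Sum.inr ∘ Sum.inl) '' {b | r a b} := by
    ext (_ | _ | _) <;> simp [threeLayerGraph, threeLayerRel]
  rw [nbrCard, this, Set.ncard_image_of_injective _ (Sum.inr_injective.comp Sum.inl_injective)]

lemma nbrCard_threeLayerGraph_inr_inl (b : β) :
    nbrCard (threeLayerGraph r s) (.inr (.inl b)) layerC = {c | s b c}.ncard := by
  have : layerC ∩ (threeLayerGraph r s).neighborSet (.inr (.inl b)) =
      (Sum.inr ∘ Sum.inr) '' {c | s b c} := by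
    ext (_ | _ | _) <;> simp [threeLayerGraph, threeLayerRel]
  rw [nbrCard, this, Set.ncard_image_of_injective _ (Sum.inr_injective.comp Sum.inr_injective)]

lemma n2card_threeLayerGraph_le [Finite α] (c : γ) :
    n2card (threeLayerGraph r s) (.inr (.inr c)) layerA ≤ {a | ∃ b, r a b ∧ s b c}.ncard := by
  rw [n2card, ← Set.ncard_image_of_injective {a | ∃ b, r a b ∧ s b c}
    (Sum.inl_injective (β := β ⊕ γ))]
  refine Set.ncard_le_ncard ?_ ((Set.toFinite _).image _)
  rintro _ ⟨⟨-, -, (_ | b | _), h₁, h₂⟩, a, rfl⟩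
  all_goals simp [threeLayerGraph, threeLayerRel] at h₁ h₂
  exact ⟨a, ⟨b, h₂, h₁⟩, rfl⟩

lemma constrained_threeLayerGraph [Nonempty α] [Nonempty β] [Nonempty γ] {x y : ℝ}
    (hr : ∀ a, x * Nat.card β ≤ {b | r a b}.ncard)
    (hs : ∀ b, y * Nat.card γ ≤ {c | s b c}.ncard) :
    Constrained (threeLayerGraph r s) x y layerA layerB layerC := by
  refine ⟨isTripartition_threeLayerGraph, ?_, ?_, ?_⟩
  · rintro _ ⟨a, rfl⟩
    rw [nbrCard_threeLayerGraph_inl,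
      Set.ncard_range_of_injective (Sum.inr_injective.comp Sum.inl_injective)]
    exact hr a
  · rintro _ ⟨b, rfl⟩
    rw [Function.comp_apply, nbrCard_threeLayerGraph_inr_inl,
      Set.ncard_range_of_injective (Sum.inr_injective.comp Sum.inr_injective)]
    exact hs b
  · rintro _ ⟨_, rfl⟩ _ ⟨_, rfl⟩
    simp [threeLayerGraph, threeLayerRel]

lemma n2card_threeLayerGraph_lt [Finite α] {θ : ℝ}
    (h : ∀ c, ({a | ∃ b, r a b ∧ s b c}.ncard : ℝ) < Nat.card α / θ) :
    ∀ v ∈ layerC, (n2card (threeLayerGraph r s) v layerA : ℝ) <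
      (layerA : Set (α ⊕ β ⊕ γ)).ncard / θ := by
  rintro _ ⟨c, rfl⟩
  rw [Set.ncard_range_of_injective Sum.inl_injective]
  exact (Nat.cast_le.2 (n2card_threeLayerGraph_le c)).trans_lt (h c)

end ThreeLayer

section HubCycle

open Finset

variable (k a e : ℕ)

abbrev HubCycleA : Type := Fin k × Fin (a + e - 1) ⊕ Fin (a + e)
abbrev HubCycleB : Type := Fin k × Fin a ⊕ Fin (a + e)
abbrev HubCycleC : Type := Fin k × Fin e ⊕ Fin (a + e)

def hubCycleAB : HubCycleA k a e → HubCycleB k a e → Prop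
  | .inl (i, _), .inl (i', _) => i = i'
  | .inr j, .inr t => (t - j).val < a
  | _, _ => False

def hubCycleBC : HubCycleB k a e → HubCycleC k a e → Prop
  | .inl (i, _), .inl (i', _) => i = i'
  | .inr t, .inr j => a ≤ (t - j).val
  | _, _ => False

instance : DecidableRel (hubCycleAB k a e) := fun u v => by
  rcases u with ⟨i, _⟩ | j <;> rcases v with ⟨i', _⟩ | t <;> unfold hubCycleAB <;>
    infer_instance

instance : DecidableRel (hubCycleBC k a e) := fun u v => by
  rcases u with ⟨i, _⟩ | t <;> rcases v with ⟨i', _⟩ | j <;> unfold hubCycleBC <;>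
    infer_instance

variable {k a e}

lemma ncard_hubCycleAB (u : HubCycleA k a e) :
    {b | hubCycleAB k a e u b}.ncard = a := by
  rw [Set.ncard_eq_toFinset_card', Set.toFinset_ofPred, card_filter, Fintype.sum_sum_type,
    Fintype.sum_prod_type]
  rcases u with ⟨i, _⟩ | j
  · simp [hubCycleAB, apply_ite Finset.card]
  · have : NeZero (a + e) := ⟨j.pos.ne'⟩
    simp [hubCycleAB, Fin.card_filter_sub_val_lt]

lemma ncard_hubCycleBC (b : HubCycleB k a e) :
    {c | hubCycleBC k a e b c}.ncard = e := by
  rw [Set.ncard_eq_toFinset_card', Set.toFinset_ofPred, card_filter, Fintype.sum_sum_type,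
    Fintype.sum_prod_type]
  rcases b with ⟨i, _⟩ | t
  · simp [hubCycleBC, apply_ite Finset.card]
  · have : NeZero (a + e) := ⟨t.pos.ne'⟩
    simp [hubCycleBC, Fin.card_filter_le_sub_val]

lemma ncard_hubCycle_reach_le (c : HubCycleC k a e) :
    {u | ∃ b, hubCycleAB k a e u b ∧ hubCycleBC k a e b c}.ncard ≤ a + e - 1 := by
  rcases c with ⟨i, _⟩ | j
  · calc _ ≤ (Sum.inl '' ({i} ×ˢ .univ) : Set (HubCycleA k a e)).ncard := by
          refine Set.ncard_le_ncard ?_ (Set.toFinite _)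
          rintro (⟨i', _⟩ | j') ⟨⟨_, _⟩ | _, h₁, h₂⟩ <;>
            simp_all [hubCycleAB, hubCycleBC]
      _ = a + e - 1 := by simp [Set.ncard_image_of_injective _ Sum.inl_injective, Set.ncard_prod]
  · calc _ ≤ (Sum.inr '' {j}ᶜ : Set (HubCycleA k a e)).ncard := by
          refine Set.ncard_le_ncard ?_ (Set.toFinite _)
          rintro (⟨i', _⟩ | j') ⟨⟨_, _⟩ | t, h₁, h₂⟩ <;>
            simp [hubCycleAB, hubCycleBC] at h₁ h₂ ⊢
          rintro rfl
          omega
      _ = a + e - 1 := by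
        rw [Set.ncard_image_of_injective _ Sum.inr_injective, Set.ncard_compl]
        simp

lemma ncard_hubCycle_reach_lt (hae : 0 < a + e) (c : HubCycleC k a e) :
    ({u | ∃ b, hubCycleAB k a e u b ∧ hubCycleBC k a e b c}.ncard : ℝ) <
      Nat.card (HubCycleA k a e) / (k + 1) := by
  rw [lt_div_iff₀ (by positivity), Nat.card_eq_fintype_card]
  simp only [Fintype.card_sum, Fintype.card_prod, Fintype.card_fin]
  have key : {u | ∃ b, hubCycleAB k a e u b ∧ hubCycleBC k a e b c}.ncard * (k + 1) <
      k * (a + e - 1) + (a + e) :=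
    calc _ ≤ (a + e - 1) * (k + 1) := Nat.mul_le_mul_right _ (ncard_hubCycle_reach_le c)
      _ < k * (a + e - 1) + (a + e) := by rw [mul_add_one, mul_comm]; omega
  exact_mod_cast key

lemma constrained_hubCycle {x y : ℝ} (hae : 0 < a + e)
    (hx : x * (k * a + (a + e)) ≤ a) (hy : y * (k * e + (a + e)) ≤ e) :
    Constrained (threeLayerGraph (hubCycleAB k a e) (hubCycleBC k a e)) x y
      layerA layerB layerC := by
  have : NeZero (a + e) := ⟨hae.ne'⟩
  refine constrained_threeLayerGraph (fun u ↦ ?_) (fun b ↦ ?_)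
  · simpa [ncard_hubCycleAB] using hx
  · simpa [ncard_hubCycleBC] using hy

end HubCycle

theorem stmt_6 (k : ℕ) (x y : ℝ) (hx : x ∈ Set.Ioc (0:ℝ) 1) (hy : y ∈ Set.Ioc (0:ℝ) 1)
    (hkx : (k : ℝ) * x < 1) (hky : (k : ℝ) * y < 1)
    (hsum : x / (1 - k * x) + y / (1 - k * y) ≤ 1)
    (hstrict : Irrational x ∨ Irrational y →
      x / (1 - k * x) + y / (1 - k * y) < 1) :
    ∃ (V : Type) (_ : Fintype V) (G : SimpleGraph V) (A B C : Set V),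
      Constrained G x y A B C ∧
      ∀ v ∈ C, (n2card G v A : ℝ) < (A.ncard : ℝ) / (k + 1) := by
  have hu : 0 ≤ x / (1 - k * x) := div_nonneg hx.1.le (by linarith)
  have hv : 0 ≤ y / (1 - k * y) := div_nonneg hy.1.le (by linarith)
  obtain ⟨q, hxq, hqy⟩ :
      ∃ q : ℚ, x / (1 - k * x) ≤ q ∧ (q : ℝ) ≤ 1 - y / (1 - k * y) := by
    refine exists_rat_mem_Icc_of_le (by linarith) ?_
    by_cases hirr : Irrational x ∨ Irrational y
    · exact .inl (by linarith [hstrict hirr])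
    · obtain ⟨qx, rfl⟩ : ∃ q : ℚ, (q : ℝ) = x := by
        simpa [Irrational] using (not_or.1 hirr).1
      exact .inr ⟨qx / (1 - k * qx), by push_cast; rfl⟩
  have hq₀ : (0 : ℝ) ≤ q := hu.trans hxq
  have hq₁ : (q : ℝ) ≤ 1 := by linarith
  obtain ⟨a, e, hae, hqae⟩ :=
    Rat.exists_cast_eq_div_add (by exact_mod_cast hq₀) (by exact_mod_cast hq₁)
  have hae' : (0 : ℝ) < a + e := by exact_mod_cast hae
  have hsplit : (a : ℝ) / (a + e) + e / (a + e) = 1 := by field_simp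
  refine ⟨_, inferInstance, threeLayerGraph (hubCycleAB k a e) (hubCycleBC k a e), _, _, _,
    constrained_hubCycle hae ?_ ?_, n2card_threeLayerGraph_lt (ncard_hubCycle_reach_lt hae)⟩
  · exact mul_add_le_of_div_one_sub_mul_le hkx hae' (hqae ▸ hxq)
  · exact mul_add_le_of_div_one_sub_mul_le hky hae' (by linarith)
end

section
/- Let k ≥ 1 be an integer, and let x, y ∈ (0,1] with (k−1)y < 1, x + ky > 1 and kx + x/(1−(k−1)y) ≥ 1. Then every graph G that is (x,y)-biconstrained via a tripartition (A,B,C) contains a vertex v ∈ C with |N²_A(v)| ≥ |A|/k. (That is, ψ(x,y) ≥ 1/k.) -/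
open Set

/-!
Suppose every `c ∈ C` has fewer than `|A|/k` second neighbours in `A`. Double counting the paths
`a - b - c` gives a vertex of `C` with at least `y|A|` second neighbours in `A`, so `ky < 1`.
Now choose `c₁, …, c_k ∈ C` greedily, each with at least `y|B|` neighbours outside
`U = N(c₁) ∪ … ∪ N(c_j)`. If the choice gets stuck at `j < k`, put
`T = N²_A(c₁) ∪ … ∪ N²_A(c_j)`, of size `< j|A|/k`. Vertices of `A \ T` have all their neighbours
in `B \ U`, of size at most `(1 - jy)|B|`, so some `b ∈ B \ U` has at least
`x|B||A \ T|/|B \ U|` neighbours in `A \ T`. A neighbour `c ∈ C` of `b` is stuck too, so it is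
adjacent to some `b' ∈ U`, whose at least `x|A|` neighbours in `A` lie in `T`. Together,
`|N²_A(c)| ≥ x|A| + x(k - j)|A|/(k(1 - jy)) ≥ |A|/k`, the last step being the hypothesis on
`x, y`. So the choice reaches `k`; then `|U| ≥ ky|B|`, and a vertex of `A \ T` has its at least
`x|B|` neighbours in `B \ U`, contradicting `x + ky > 1`.
-/

lemma exists_mul_ncard_div_le_ncard_sep {α β : Type*} [Finite α] [Finite β] {s : Set α}
    {t : Set β} (ht : t.Nonempty) (r : α → β → Prop) {d : ℝ}
    (hd : ∀ a ∈ s, d ≤ {b ∈ t | r a b}.ncard) :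
    ∃ b ∈ t, d * s.ncard / t.ncard ≤ {a ∈ s | r a b}.ncard := by
  classical
  obtain ⟨S, rfl⟩ := s.toFinite.exists_finset_coe
  obtain ⟨T, rfl⟩ := t.toFinite.exists_finset_coe
  have hS : ∀ b, ({a ∈ (S : Set α) | r a b} : Set α).ncard = (S.bipartiteBelow r b).card :=
    fun b ↦ by rw [← ncard_coe_finset]; congr 1; ext; simp
  have hT : ∀ a, ({b ∈ (T : Set β) | r a b} : Set β).ncard = (T.bipartiteAbove r a).card :=
    fun a ↦ by rw [← ncard_coe_finset]; congr 1; ext; simp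
  simp only [hS, hT, ncard_coe_finset] at hd ⊢
  have hTpos : (0 : ℝ) < T.card := by simpa using ht
  refine Finset.exists_le_of_sum_le ht ?_
  calc ∑ _b ∈ T, d * S.card / T.card = ∑ a ∈ S, d := by
        rw [Finset.sum_const, Finset.sum_const, nsmul_eq_mul, nsmul_eq_mul]
        field_simp
    _ ≤ ∑ a ∈ S, ((T.bipartiteAbove r a).card : ℝ) := Finset.sum_le_sum hd
    _ = ∑ b ∈ T, ((S.bipartiteBelow r b).card : ℝ) := by
        exact_mod_cast Finset.sum_card_bipartiteAbove_eq_sum_card_bipartiteBelow r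

lemma sub_div_one_sub_mul_le_of_le {k y i j : ℝ} (hy : 0 ≤ y) (hky : k * y ≤ 1)
    (hjy : j * y < 1) (hij : i ≤ j) : (k - j) / (1 - j * y) ≤ (k - i) / (1 - i * y) := by
  have hiy : i * y < 1 := lt_of_le_of_lt (mul_le_mul_of_nonneg_right hij hy) hjy
  rw [div_le_div_iff₀ (by linarith) (by linarith)]
  nlinarith [mul_nonneg (sub_nonneg.2 hij) (sub_nonneg.2 hky)]

lemma div_le_mul_add_mul_mul_div {k j x y n m α β : ℝ} (hx : 0 ≤ x) (hy : 0 ≤ y) (hk : 0 < k)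
    (hn : 0 ≤ n) (hm : 0 < m) (hky : k * y ≤ 1) (hjk : j ≤ k - 1)
    (hxy : 1 ≤ k * x + x / (1 - (k - 1) * y)) (hα : (k - j) * (n / k) ≤ α) (hβ : 0 < β)
    (hβm : β ≤ (1 - j * y) * m) :
    n / k ≤ x * n + x * m * α / β := by
  have hjy : j * y < 1 := by nlinarith
  have hα0 : 0 ≤ α := le_trans (mul_nonneg (by linarith) (by positivity)) hα
  have hratio : 1 / (1 - (k - 1) * y) ≤ (k - j) / (1 - j * y) := by
    simpa using sub_div_one_sub_mul_le_of_le hy hky (by nlinarith) hjk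
  calc n / k ≤ n / k * (k * x + x / (1 - (k - 1) * y)) :=
        le_mul_of_one_le_right (by positivity) hxy
    _ = x * n + n / k * x * (1 / (1 - (k - 1) * y)) := by field_simp
    _ ≤ x * n + n / k * x * ((k - j) / (1 - j * y)) := by gcongr
    _ = x * n + x * ((k - j) * (n / k)) / (1 - j * y) := by ring
    _ ≤ x * n + x * α / (1 - j * y) := by gcongr
    _ = x * n + x * m * α / ((1 - j * y) * m) := by field_simp
    _ ≤ x * n + x * m * α / β := by gcongr

lemma exists_finset_card_eq_mul_le_ncard_biUnion {ι α : Type*} [Finite α] {f : ι → Set α}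
    {C : Set ι} {d : ℝ} (hd : 0 < d) {k : ℕ}
    (hext : ∀ F : Finset ι, ↑F ⊆ C → F.card < k → F.card * d ≤ (⋃ i ∈ F, f i).ncard →
      ∃ i ∈ C, d ≤ (f i \ ⋃ i' ∈ F, f i').ncard) :
    ∃ F : Finset ι, ↑F ⊆ C ∧ F.card = k ∧ k * d ≤ (⋃ i ∈ F, f i).ncard := by
  classical
  suffices ∀ j ≤ k, ∃ F : Finset ι, ↑F ⊆ C ∧ F.card = j ∧ j * d ≤ (⋃ i ∈ F, f i).ncard from
    this k le_rfl
  intro j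
  induction j with
  | zero => exact fun _ ↦ ⟨∅, by simp⟩
  | succ j ih =>
    intro hjk
    obtain ⟨F, hFC, rfl, hF⟩ := ih (by omega)
    obtain ⟨i, hiC, hi⟩ := hext F hFC (by omega) hF
    have hiF : i ∉ F := fun hiF ↦ by
      rw [sdiff_eq_empty.2 (Finset.subset_set_biUnion_of_mem hiF)] at hi
      simp at hi; linarith
    refine ⟨insert i F, by simpa [insert_subset_iff] using ⟨hiC, hFC⟩,
      Finset.card_insert_of_notMem hiF, ?_⟩
    rw [Finset.set_biUnion_insert, union_comm, ← union_sdiff_self,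
      ncard_union_eq disjoint_sdiff_right]
    push_cast
    linarith

section Tripartition

variable {V : Type*} {G : SimpleGraph V} {A B C : Set V} {x y : ℝ}

lemma nbrCard_eq_ncard_neighborSet {v : V} {S : Set V} (h : G.neighborSet v ⊆ S) :
    nbrCard G v S = (G.neighborSet v).ncard := by
  rw [nbrCard, inter_eq_self_of_subset_right h]

lemma IsTripartition.neighborSet_subset_of_mem_left (hT : IsTripartition G A B C)
    (hAC : ∀ u ∈ A, ∀ v ∈ C, ¬ G.Adj u v) {a : V} (ha : a ∈ A) : G.neighborSet a ⊆ B := by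
  obtain ⟨-, -, -, -, -, -, hcover, hA, -, -⟩ := hT
  intro w hw
  have hw' : w ∈ A ∪ B ∪ C := hcover ▸ mem_univ w
  rcases hw' with (hwA | hwB) | hwC
  · exact absurd hw (hA a ha w hwA)
  · exact hwB
  · exact absurd hw (hAC a ha w hwC)

lemma IsTripartition.neighborSet_subset_of_mem_right (hT : IsTripartition G A B C)
    (hAC : ∀ u ∈ A, ∀ v ∈ C, ¬ G.Adj u v) {c : V} (hc : c ∈ C) : G.neighborSet c ⊆ B := by
  obtain ⟨-, -, -, -, -, -, hcover, -, -, hC⟩ := hT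
  intro w hw
  have hw' : w ∈ A ∪ B ∪ C := hcover ▸ mem_univ w
  rcases hw' with (hwA | hwB) | hwC
  · exact absurd hw.symm (hAC w hwA c hc)
  · exact hwB
  · exact absurd hw (hC c hc w hwC)

lemma IsTripartition.biUnion_neighborSet_subset (hT : IsTripartition G A B C)
    (hAC : ∀ u ∈ A, ∀ v ∈ C, ¬ G.Adj u v) {F : Finset V} (hFC : ↑F ⊆ C) :
    ⋃ c ∈ F, G.neighborSet c ⊆ B :=
  iUnion₂_subset fun _ hc ↦ hT.neighborSet_subset_of_mem_right hAC (hFC hc)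

lemma mem_N2_inter_of_adj (hdisj : Disjoint A C) (hAC : ∀ u ∈ A, ∀ v ∈ C, ¬ G.Adj u v)
    {a b c : V} (ha : a ∈ A) (hc : c ∈ C) (hcb : G.Adj c b) (hba : G.Adj b a) :
    a ∈ N2 G c ∩ A :=
  ⟨⟨fun hca ↦ hAC a ha c hc hca.symm, fun hca ↦ disjoint_left.1 hdisj ha (hca ▸ hc),
    b, hcb, hba⟩, ha⟩

theorem Constrained.exists_mul_ncard_le_n2card [Finite V] (hG : Constrained G x y A B C)
    (hx : 0 < x) : ∃ c ∈ C, y * A.ncard ≤ n2card G c A := by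
  obtain ⟨hT, hAB, hBC, hAC⟩ := hG
  obtain ⟨-, hB, hC, -, hdisj, -⟩ := hT
  have hCpos : (0 : ℝ) < C.ncard := by exact_mod_cast hC.ncard_pos
  have hcount : ∀ a ∈ A, y * C.ncard ≤ {c ∈ C | a ∈ N2 G c}.ncard := by
    intro a ha
    obtain ⟨b, hbB, hab⟩ : (B ∩ G.neighborSet a).Nonempty := by
      have hBpos : (0 : ℝ) < B.ncard := by exact_mod_cast hB.ncard_pos
      have hpos : (0 : ℝ) < nbrCard G a B := (mul_pos hx hBpos).trans_le (hAB a ha)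
      exact nonempty_of_ncard_ne_zero (by exact_mod_cast hpos.ne')
    calc y * C.ncard ≤ nbrCard G b C := hBC b hbB
      _ ≤ {c ∈ C | a ∈ N2 G c}.ncard := by
        refine Nat.cast_le.2 (ncard_le_ncard (fun c ⟨hc, hbc⟩ ↦ ⟨hc, ?_⟩))
        exact (mem_N2_inter_of_adj hdisj hAC ha hc hbc.symm hab.symm).1
  obtain ⟨c, hc, hle⟩ := exists_mul_ncard_div_le_ncard_sep hC (fun a c ↦ a ∈ N2 G c) hcount
  refine ⟨c, hc, ?_⟩
  rwa [mul_right_comm, mul_div_cancel_right₀ _ hCpos.ne', sep_mem_eq, inter_comm] at hle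

lemma ncard_sub_sum_n2card_le_ncard_diff [Finite V] (F : Finset V) :
    (A.ncard : ℝ) - ∑ c ∈ F, (n2card G c A : ℝ) ≤ (A \ ⋃ c ∈ F, N2 G c ∩ A).ncard := by
  have hsum : ((⋃ c ∈ F, N2 G c ∩ A).ncard : ℝ) ≤ ∑ c ∈ F, (n2card G c A : ℝ) := by
    exact_mod_cast Finset.set_ncard_biUnion_le F _
  rw [cast_ncard_sdiff (iUnion₂_subset fun _ _ ↦ inter_subset_right) A.toFinite]
  linarith

lemma IsTripartition.neighborSet_subset_diff_biUnion (hT : IsTripartition G A B C)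
    (hAC : ∀ u ∈ A, ∀ v ∈ C, ¬ G.Adj u v) {F : Finset V} (hFC : ↑F ⊆ C) {a : V} (ha : a ∈ A)
    (haT : a ∉ ⋃ c ∈ F, N2 G c ∩ A) : G.neighborSet a ⊆ B \ ⋃ c ∈ F, G.neighborSet c := by
  refine fun b hab ↦ ⟨hT.neighborSet_subset_of_mem_left hAC ha hab, fun hbU ↦ haT ?_⟩
  obtain ⟨c, hcF, hcb⟩ := mem_iUnion₂.1 hbU
  exact mem_iUnion₂.2 ⟨c, hcF, mem_N2_inter_of_adj hT.2.2.2.2.1 hAC ha (hFC hcF) hcb hab.symm⟩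

lemma Constrained.mul_ncard_le_ncard_diff_biUnion [Finite V] (hG : Constrained G x y A B C)
    {F : Finset V} (hFC : ↑F ⊆ C) {a : V} (ha : a ∈ A) (haT : a ∉ ⋃ c ∈ F, N2 G c ∩ A) :
    x * B.ncard ≤ (B \ ⋃ c ∈ F, G.neighborSet c).ncard := by
  obtain ⟨hT, hAB, -, hAC⟩ := hG
  have hsub := hT.neighborSet_subset_diff_biUnion hAC hFC ha haT
  calc x * B.ncard ≤ nbrCard G a B := hAB a ha
    _ = (G.neighborSet a).ncard := by
      rw [nbrCard_eq_ncard_neighborSet (hsub.trans sdiff_subset)]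
    _ ≤ _ := Nat.cast_le.2 (ncard_le_ncard hsub)

lemma nbrCard_add_ncard_le_n2card [Finite V] (hdisj : Disjoint A C)
    (hAC : ∀ u ∈ A, ∀ v ∈ C, ¬ G.Adj u v) {T : Set V} {b b' c : V} (hc : c ∈ C)
    (hcb : G.Adj c b) (hcb' : G.Adj c b') (hb'T : A ∩ G.neighborSet b' ⊆ T) :
    nbrCard G b' A + ((A \ T) ∩ G.neighborSet b).ncard ≤ n2card G c A := by
  have hN2 : ∀ {b}, G.Adj c b → ∀ a ∈ A, G.Adj b a → a ∈ N2 G c ∩ A :=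
    fun hcb a ha hba ↦ mem_N2_inter_of_adj hdisj hAC ha hc hcb hba
  rw [nbrCard, n2card, ← ncard_union_eq]
  · refine ncard_le_ncard (union_subset ?_ ?_)
    · exact fun a ⟨ha, hb'a⟩ ↦ hN2 hcb' a ha hb'a
    · exact fun a ⟨ha, hba⟩ ↦ hN2 hcb a ha.1 hba
  · exact disjoint_left.2 fun a ha ha' ↦ ha'.1.2 (hb'T ha)

theorem Biconstrained.exists_n2card_ge_of_forall_ncard_diff_lt [Finite V]
    (hG : Biconstrained G x y A B C) (hx : 0 < x) (hy : 0 < y) {F : Finset V} (hFC : ↑F ⊆ C)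
    (hstuck : ∀ c ∈ C, ((G.neighborSet c \ ⋃ c' ∈ F, G.neighborSet c').ncard : ℝ) < y * B.ncard)
    (hA : (A \ ⋃ c ∈ F, N2 G c ∩ A).Nonempty) :
    ∃ c ∈ C, x * A.ncard + x * B.ncard * (A \ ⋃ c ∈ F, N2 G c ∩ A).ncard /
      (B \ ⋃ c ∈ F, G.neighborSet c).ncard ≤ n2card G c A := by
  set U := ⋃ c ∈ F, G.neighborSet c
  set T := ⋃ c ∈ F, N2 G c ∩ A
  obtain ⟨hT, -, hBC, hAC⟩ := hG.1
  obtain ⟨hG', hBA, hCB⟩ := hG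
  have hdisj : Disjoint A C := hT.2.2.2.2.1
  obtain ⟨a₀, ha₀A, ha₀T⟩ := hA
  have hBU : (B \ U).Nonempty := by
    have hBpos : (0 : ℝ) < B.ncard := by exact_mod_cast hT.2.1.ncard_pos
    have := (mul_pos hx hBpos).trans_le (hG'.mul_ncard_le_ncard_diff_biUnion hFC ha₀A ha₀T)
    exact nonempty_of_ncard_ne_zero (by exact_mod_cast this.ne')
  have hdeg : ∀ a ∈ A \ T, x * B.ncard ≤ ({b ∈ B \ U | a ∈ G.neighborSet b}.ncard : ℝ) := by
    rintro a ⟨haA, haT⟩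
    have hsub := hT.neighborSet_subset_diff_biUnion hAC hFC haA haT
    calc x * B.ncard ≤ nbrCard G a B := hG'.2.1 a haA
      _ = (G.neighborSet a).ncard := by
        rw [nbrCard_eq_ncard_neighborSet (hsub.trans sdiff_subset)]
      _ ≤ _ := Nat.cast_le.2 <| ncard_le_ncard (t := {b ∈ B \ U | a ∈ G.neighborSet b})
        fun b hab ↦ ⟨hsub hab, hab.symm⟩
  obtain ⟨b, ⟨hbB, -⟩, hb⟩ := exists_mul_ncard_div_le_ncard_sep hBU _ hdeg
  obtain ⟨c, hcC, hbc⟩ : (C ∩ G.neighborSet b).Nonempty := by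
    have hCpos : (0 : ℝ) < C.ncard := by exact_mod_cast hT.2.2.1.ncard_pos
    have := (mul_pos hy hCpos).trans_le (hBC b hbB)
    exact nonempty_of_ncard_ne_zero (by exact_mod_cast this.ne')
  -- `c` has fewer than `y|B|` neighbours outside `U` but at least `y|B|` in total
  obtain ⟨b', hcb', hb'U⟩ : ∃ b' ∈ G.neighborSet c, b' ∉ G.neighborSet c \ U := by
    refine exists_mem_notMem_of_ncard_lt_ncard (Nat.cast_lt.1 ((hstuck c hcC).trans_le ?_))
    rw [← nbrCard_eq_ncard_neighborSet (hT.neighborSet_subset_of_mem_right hAC hcC)]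
    exact hCB c hcC
  obtain ⟨c', hc'F, hc'b'⟩ := mem_iUnion₂.1 (not_not.1 fun h ↦ hb'U ⟨hcb', h⟩)
  have hb'T : A ∩ G.neighborSet b' ⊆ T := fun a ⟨ha, hb'a⟩ ↦
    mem_iUnion₂.2 ⟨c', hc'F, mem_N2_inter_of_adj hdisj hAC ha (hFC hc'F) hc'b' hb'a⟩
  have hb'B : b' ∈ B := hT.neighborSet_subset_of_mem_right hAC (hFC hc'F) hc'b'
  refine ⟨c, hcC, ?_⟩
  have hle := nbrCard_add_ncard_le_n2card hdisj hAC hcC hbc.symm hcb' hb'T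
  rw [sep_mem_eq] at hb
  calc _ ≤ (nbrCard G b' A : ℝ) + ((A \ T) ∩ G.neighborSet b).ncard := by
        gcongr
        exact hBA b' hb'B
    _ ≤ n2card G c A := by exact_mod_cast hle

theorem Biconstrained.exists_mul_ncard_le_ncard_neighborSet_diff [Finite V]
    (hG : Biconstrained G x y A B C) (hx : 0 < x) (hy : 0 < y) {k : ℕ} (hky : k * y < 1)
    (hxy : 1 ≤ (k : ℝ) * x + x / (1 - ((k : ℝ) - 1) * y))
    (hsmall : ∀ c ∈ C, (n2card G c A : ℝ) < A.ncard / k) {F : Finset V} (hFC : ↑F ⊆ C)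
    (hFk : F.card < k) (hF : F.card * (y * B.ncard) ≤ (⋃ c ∈ F, G.neighborSet c).ncard) :
    ∃ c ∈ C, y * B.ncard ≤ (G.neighborSet c \ ⋃ c' ∈ F, G.neighborSet c').ncard := by
  set n := A.ncard
  set m := B.ncard
  set j := F.card
  set U := ⋃ c ∈ F, G.neighborSet c
  set T := ⋃ c ∈ F, N2 G c ∩ A
  obtain ⟨hT, -, -, hAC⟩ := hG.1
  by_contra! hstuck
  have hk : (0 : ℝ) < k := by exact_mod_cast hFk.pos
  have hjk : (j : ℝ) ≤ k - 1 := by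
    have : (j : ℝ) + 1 ≤ k := by exact_mod_cast hFk
    linarith
  have hm : (0 : ℝ) < m := by exact_mod_cast hT.2.1.ncard_pos
  have hn : (0 : ℝ) < n := by exact_mod_cast hT.1.ncard_pos
  have hAT : ((k : ℝ) - j) * (n / k) ≤ (A \ T).ncard := by
    have hsum : ∑ c ∈ F, (n2card G c A : ℝ) ≤ j * (n / k) := by
      simpa using Finset.sum_le_card_nsmul F _ _ fun c hc ↦ (hsmall c (hFC hc)).le
    have hkn : (k : ℝ) * (n / k) = n := mul_div_cancel₀ _ hk.ne'
    linarith [ncard_sub_sum_n2card_le_ncard_diff (G := G) (A := A) F]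
  have hATne : (A \ T).Nonempty := by
    have : (0 : ℝ) < (k - j) * (n / k) := mul_pos (by linarith) (div_pos hn hk)
    exact nonempty_of_ncard_ne_zero (by exact_mod_cast (this.trans_le hAT).ne')
  have hBU : ((B \ U).ncard : ℝ) ≤ (1 - j * y) * m := by
    rw [cast_ncard_sdiff (hT.biUnion_neighborSet_subset hAC hFC) B.toFinite]
    linarith
  have hBUpos : (0 : ℝ) < (B \ U).ncard := by
    obtain ⟨a, haA, haT⟩ := hATne
    exact (mul_pos hx hm).trans_le (hG.1.mul_ncard_le_ncard_diff_biUnion hFC haA haT)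
  obtain ⟨c, hcC, hc⟩ := hG.exists_n2card_ge_of_forall_ncard_diff_lt hx hy hFC hstuck hATne
  have := div_le_mul_add_mul_mul_div hx.le hy.le hk hn.le hm hky.le hjk hxy hAT hBUpos hBU
  linarith [hsmall c hcC]

end Tripartition

theorem stmt_8_general (k : ℕ) (hk : 1 ≤ k) (x y : ℝ)
    (hx : x ∈ Set.Ioc (0:ℝ) 1) (hy : y ∈ Set.Ioc (0:ℝ) 1)
    (h1 : 1 < x + k * y)
    (h2 : 1 ≤ (k : ℝ) * x + x / (1 - ((k : ℝ) - 1) * y))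
    {V : Type} [Fintype V] (G : SimpleGraph V) (A B C : Set V)
    (hG : Biconstrained G x y A B C) :
    ∃ v ∈ C, (A.ncard : ℝ) / k ≤ (n2card G v A : ℝ) := by
  by_contra! hsmall
  obtain ⟨hT, -, -, hAC⟩ := hG.1
  have hkpos : (0 : ℝ) < k := by exact_mod_cast hk
  have hn : (0 : ℝ) < A.ncard := by exact_mod_cast hT.1.ncard_pos
  have hm : (0 : ℝ) < B.ncard := by exact_mod_cast hT.2.1.ncard_pos
  have hky : k * y < 1 := by
    obtain ⟨c, hcC, hc⟩ := hG.1.exists_mul_ncard_le_n2card hx.1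
    have := hc.trans_lt (hsmall c hcC)
    rw [lt_div_iff₀ hkpos] at this
    nlinarith
  obtain ⟨F, hFC, hFk, hF⟩ := exists_finset_card_eq_mul_le_ncard_biUnion (mul_pos hy.1 hm)
    fun _ hFC hFk hF ↦
      hG.exists_mul_ncard_le_ncard_neighborSet_diff hx.1 hy.1 hky h2 hsmall hFC hFk hF
  obtain ⟨a, haA, haT⟩ : (A \ ⋃ c ∈ F, N2 G c ∩ A).Nonempty := by
    have hsum : ∑ c ∈ F, (n2card G c A : ℝ) < A.ncard := calc
      _ < ∑ _c ∈ F, (A.ncard : ℝ) / k :=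
        Finset.sum_lt_sum_of_nonempty (Finset.card_pos.1 (hFk ▸ hk))
          fun c hc ↦ hsmall c (hFC hc)
      _ = A.ncard := by simp [hFk, mul_div_cancel₀ _ hkpos.ne']
    have := (sub_pos.2 hsum).trans_le (ncard_sub_sum_n2card_le_ncard_diff F)
    exact nonempty_of_ncard_ne_zero (by exact_mod_cast this.ne')
  have := hG.1.mul_ncard_le_ncard_diff_biUnion hFC haA haT
  rw [cast_ncard_sdiff (hT.biUnion_neighborSet_subset hAC hFC) B.toFinite] at this
  nlinarith

theorem stmt_8 (k : ℕ) (hk : 1 ≤ k) (x y : ℝ)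
    (hx : x ∈ Set.Ioc (0:ℝ) 1) (hy : y ∈ Set.Ioc (0:ℝ) 1)
    (h0 : ((k : ℝ) - 1) * y < 1)
    (h1 : 1 < x + k * y)
    (h2 : 1 ≤ (k : ℝ) * x + x / (1 - ((k : ℝ) - 1) * y))
    {V : Type} [Fintype V] (G : SimpleGraph V) (A B C : Set V)
    (hG : Biconstrained G x y A B C) :
    ∃ v ∈ C, (A.ncard : ℝ) / k ≤ (n2card G v A : ℝ) :=
  stmt_8_general k hk x y hx hy h1 h2 G A B C hG
end

section
/- Let k ≥ 1 be an integer, and let x, y ∈ (0,1] with x + ky > 1 and kx + y ≥ 1. Then every graph G that is (x,y)-biconstrained via a tripartition (A,B,C) contains a vertex v ∈ C with |N²_A(v)| ≥ |A|/k. (That is, ψ(x,y) ≥ 1/k.) -/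
open Set

/-! Pick greedily vertices of `C` with pairwise disjoint neighbourhoods in `B`, stopping at `k`.
If `k` are found, then, as `x + k y > 1`, every `a ∈ A` shares a `B`-neighbour with one of them,
so their second neighbourhoods cover `A` and one of them meets at least `|A|/k` vertices of `A`.
Otherwise the family `F` found has fewer than `k` members and every `c ∈ C` shares a
`B`-neighbour `b` with some member of `F`. If no member of `F` works, the part `Z` of `A` at
distance two from `F` has at most `(k-1)|A|/k` vertices; averaging over `C` gives `c ∈ C` at
distance two from a `y`-fraction of `A \ Z`, while the `A`-neighbours of `b` give `x|A|` more
vertices of `N²_A(c)` inside `Z`. In total `|N²_A(c)| ≥ (kx + y)|A|/k ≥ |A|/k`. -/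

namespace Set

variable {α ι : Type*}

lemma nonempty_of_mul_ncard_le [Finite α] {S T : Set α} {x : ℝ} (hx : 0 < x) (hS : S.Nonempty)
    (h : x * S.ncard ≤ T.ncard) : T.Nonempty := by
  have hS' : (0 : ℝ) < S.ncard := by exact_mod_cast (ncard_pos S.toFinite).2 hS
  exact (ncard_pos T.toFinite).1 (by exact_mod_cast (mul_pos hx hS').trans_le h)

lemma exists_inter_nonempty_of_ncard_lt [Finite α] {B S : Set α} {F : Finset ι}
    {T : ι → Set α} (hS : S ⊆ B) (hT : ∀ i ∈ F, T i ⊆ B) (hF : (F : Set ι).PairwiseDisjoint T)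
    (hcard : B.ncard < S.ncard + ∑ i ∈ F, (T i).ncard) : ∃ i ∈ F, (S ∩ T i).Nonempty := by
  by_contra! h
  have hdisj : Disjoint S (⋃ i ∈ F, T i) :=
    disjoint_iUnion₂_right.2 fun i hi => disjoint_iff_inter_eq_empty.2 (h i hi)
  have hunion : (⋃ i ∈ F, T i).ncard = ∑ i ∈ F, (T i).ncard := by
    rw [← Finset.set_biUnion_coe, F.finite_toSet.ncard_biUnion (fun _ _ => toFinite _) hF,
      finsum_mem_coe_finset]
  have := ncard_le_ncard (union_subset hS (iUnion₂_subset hT))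
  rw [ncard_union_eq hdisj, hunion] at this
  omega

lemma exists_div_card_le_ncard_inter_of_subset_biUnion {A : Set α} {F : Finset ι}
    {T : ι → Set α} (hF : F.Nonempty) (hA : A ⊆ ⋃ i ∈ F, T i) :
    ∃ i ∈ F, (A.ncard : ℝ) / F.card ≤ (T i ∩ A).ncard := by
  refine F.exists_le_of_sum_le hF ?_
  have hcover : A = ⋃ i ∈ F, T i ∩ A := by
    rw [← iUnion₂_inter]; exact (inter_eq_right.2 hA).symm
  have hcard : A.ncard ≤ ∑ i ∈ F, (T i ∩ A).ncard := by
    conv_lhs => rw [hcover]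
    exact F.set_ncard_biUnion_le _
  rw [Finset.sum_const, nsmul_eq_mul, mul_div_cancel₀ _ (by exact_mod_cast hF.card_pos.ne')]
  exact_mod_cast hcard

lemma exists_mul_ncard_le_ncard_setOf [Finite α] {β : Type*} [Finite β] (r : α → β → Prop)
    {S : Set α} {C : Set β} (hC : C.Nonempty) {y : ℝ}
    (h : ∀ a ∈ S, y * C.ncard ≤ {c ∈ C | r a c}.ncard) :
    ∃ c ∈ C, y * S.ncard ≤ {a ∈ S | r a c}.ncard := by
  classical
  have := Fintype.ofFinite α
  have := Fintype.ofFinite β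
  by_contra! h'
  have key := Finset.card_nsmul_lt_card_nsmul_of_le_of_lt (s := S.toFinset) (t := C.toFinset)
    (m := y * C.ncard) (n := y * S.ncard) r (by simpa using hC)
    (fun a ha => by
      simp only [← ncard_coe_finset, Finset.coe_bipartiteAbove, mem_toFinset]
      exact h a (mem_toFinset.1 ha))
    (fun c hc => by
      simp only [← ncard_coe_finset, Finset.coe_bipartiteBelow, mem_toFinset]
      exact h' c (mem_toFinset.1 hc))
  simp only [nsmul_eq_mul, ← ncard_eq_toFinset_card'] at key
  linarith

lemma exists_pairwiseDisjoint_card_eq_or_forall_exists_inter_nonempty {C : Set ι}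
    (N : ι → Set α) (hN : ∀ c ∈ C, (N c).Nonempty) (k : ℕ) :
    (∃ F : Finset ι, ↑F ⊆ C ∧ F.card = k ∧ (F : Set ι).PairwiseDisjoint N) ∨
      ∃ F : Finset ι, ↑F ⊆ C ∧ F.card < k ∧ ∀ c ∈ C, ∃ c' ∈ F, (N c ∩ N c').Nonempty := by
  classical
  induction k with
  | zero => exact .inl ⟨∅, by simp, rfl, by simp⟩
  | succ k ih =>
    rcases ih with ⟨F, hFC, hFk, hF⟩ | ⟨F, hFC, hFk, hdom⟩
    · by_cases! hdom : ∀ c ∈ C, ∃ c' ∈ F, (N c ∩ N c').Nonempty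
      · exact .inr ⟨F, hFC, by omega, hdom⟩
      obtain ⟨c, hc, hcF⟩ := hdom
      have hcF' : c ∉ F := fun h => (hN c hc).ne_empty (by simpa using hcF c h)
      refine .inl ⟨insert c F, ?_, ?_, ?_⟩
      · simpa [insert_subset_iff] using ⟨hc, hFC⟩
      · rw [Finset.card_insert_of_notMem hcF', hFk]
      · rw [Finset.coe_insert]
        exact hF.insert_of_notMem hcF' fun c' hc' => disjoint_iff_inter_eq_empty.2 (hcF c' hc')
    · exact .inr ⟨F, hFC, by omega, hdom⟩

end Set

section Tripartite

variable {V : Type*} {G : SimpleGraph V} {A B C : Set V}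

lemma mem_N2_of_adj_of_adj (hAC : Disjoint A C) (hnoAC : ∀ u ∈ A, ∀ v ∈ C, ¬ G.Adj u v)
    {a b c : V} (ha : a ∈ A) (hc : c ∈ C) (hab : G.Adj a b) (hcb : G.Adj c b) : a ∈ N2 G c :=
  ⟨fun h => hnoAC a ha c hc h.symm, fun h => hAC.ne_of_mem ha hc h.symm, b, hcb, hab.symm⟩

variable [Finite V]

lemma subset_biUnion_N2_of_pairwiseDisjoint {x y : ℝ} {F : Finset V} (hAC : Disjoint A C)
    (hnoAC : ∀ u ∈ A, ∀ v ∈ C, ¬ G.Adj u v) (hB : B.Nonempty)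
    (hAB : ∀ v ∈ A, x * B.ncard ≤ nbrCard G v B) (hCB : ∀ v ∈ C, y * B.ncard ≤ nbrCard G v B)
    (hFC : ↑F ⊆ C) (hF : (F : Set V).PairwiseDisjoint fun c => B ∩ G.neighborSet c)
    (hxy : 1 < x + F.card * y) : A ⊆ ⋃ c ∈ F, N2 G c := by
  intro a ha
  have hB' : (0 : ℝ) < B.ncard := by exact_mod_cast (ncard_pos B.toFinite).2 hB
  have hcard : B.ncard < nbrCard G a B + ∑ c ∈ F, nbrCard G c B := by
    have hsum : F.card * (y * B.ncard) ≤ ∑ c ∈ F, (nbrCard G c B : ℝ) := by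
      simpa using Finset.card_nsmul_le_sum F _ _ fun c hc => hCB c (hFC hc)
    have : (B.ncard : ℝ) < nbrCard G a B + ∑ c ∈ F, (nbrCard G c B : ℝ) := by
      linarith [hAB a ha, mul_lt_mul_of_pos_right hxy hB']
    exact_mod_cast this
  obtain ⟨c, hcF, b, ⟨-, hab⟩, -, hcb⟩ := exists_inter_nonempty_of_ncard_lt inter_subset_left
    (fun _ _ => inter_subset_left) hF hcard
  exact mem_iUnion₂.2 ⟨c, hcF, mem_N2_of_adj_of_adj hAC hnoAC ha (hFC hcF) hab hcb⟩

lemma mul_ncard_le_ncard_setOf_mem_N2 {y : ℝ} (hAC : Disjoint A C)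
    (hnoAC : ∀ u ∈ A, ∀ v ∈ C, ¬ G.Adj u v) (hBC : ∀ v ∈ B, y * C.ncard ≤ nbrCard G v C)
    {a : V} (ha : a ∈ A) (haB : (B ∩ G.neighborSet a).Nonempty) :
    y * C.ncard ≤ {c ∈ C | a ∈ N2 G c}.ncard := by
  obtain ⟨b, hb, hab⟩ := haB
  refine (hBC b hb).trans (Nat.cast_le.2 (ncard_le_ncard fun c ⟨hc, hbc⟩ => ⟨hc, ?_⟩))
  exact mem_N2_of_adj_of_adj hAC hnoAC ha hc hab (G.adj_symm hbc)

lemma exists_div_le_n2card_of_forall_exists_inter_nonempty {x y : ℝ} {k : ℕ} (hy : 0 ≤ y)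
    (hxy : 1 ≤ k * x + y) (hAC : Disjoint A C) (hnoAC : ∀ u ∈ A, ∀ v ∈ C, ¬ G.Adj u v)
    (hC : C.Nonempty) (hAB : ∀ a ∈ A, (B ∩ G.neighborSet a).Nonempty)
    (hBA : ∀ v ∈ B, x * A.ncard ≤ nbrCard G v A) (hBC : ∀ v ∈ B, y * C.ncard ≤ nbrCard G v C)
    {F : Finset V} (hFC : ↑F ⊆ C) (hFk : F.card < k)
    (hdom : ∀ c ∈ C, ∃ c' ∈ F, (B ∩ G.neighborSet c ∩ (B ∩ G.neighborSet c')).Nonempty) :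
    ∃ v ∈ C, (A.ncard : ℝ) / k ≤ n2card G v A := by
  by_contra! hsmall
  set Z := A ∩ ⋃ c ∈ F, N2 G c
  have hZ : (Z.ncard : ℝ) ≤ F.card * (A.ncard / k) := by
    have hsub : Z ⊆ ⋃ c ∈ F, N2 G c ∩ A := by
      rw [← iUnion₂_inter, inter_comm]
    have hsum : ∑ c ∈ F, (n2card G c A : ℝ) ≤ F.card * (A.ncard / k) := by
      simpa using F.sum_le_card_nsmul _ _ fun c hc => (hsmall c (hFC hc)).le
    refine le_trans ?_ hsum
    exact_mod_cast (ncard_le_ncard hsub).trans (F.set_ncard_biUnion_le _)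
  obtain ⟨c, hc, hcfar⟩ := exists_mul_ncard_le_ncard_setOf (fun a c => a ∈ N2 G c) hC
    (S := A \ Z) fun a ha =>
      mul_ncard_le_ncard_setOf_mem_N2 hAC hnoAC hBC ha.1 (hAB a ha.1)
  obtain ⟨c', hc'F, b, ⟨hb, hcb⟩, -, hc'b⟩ := hdom c hc
  have hcnear : x * A.ncard ≤ {a ∈ Z | a ∈ N2 G c}.ncard := by
    refine (hBA b hb).trans (Nat.cast_le.2 (ncard_le_ncard fun a ⟨ha, hba⟩ => ?_))
    have hab := G.adj_symm hba
    exact ⟨⟨ha, mem_iUnion₂.2 ⟨c', hc'F, mem_N2_of_adj_of_adj hAC hnoAC ha (hFC hc'F) hab hc'b⟩⟩,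
      mem_N2_of_adj_of_adj hAC hnoAC ha hc hab hcb⟩
  have hsplit : {a ∈ Z | a ∈ N2 G c}.ncard + {a ∈ A \ Z | a ∈ N2 G c}.ncard = n2card G c A := by
    rw [n2card, ← ncard_inter_add_ncard_sdiff_eq_ncard (N2 G c ∩ A) Z]
    congr 2 <;> ext a <;> simp only [Z, mem_ofPred_eq, mem_inter_iff, mem_sdiff] <;> tauto
  have hAZ : ((A \ Z).ncard : ℝ) = A.ncard - Z.ncard := cast_ncard_sdiff inter_subset_left A.toFinite
  have hk : (F.card : ℝ) + 1 ≤ k := by exact_mod_cast hFk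
  have hkpos : (0 : ℝ) < k := by exact_mod_cast Nat.zero_lt_of_lt hFk
  set q : ℝ := A.ncard / k
  have hAq : (A.ncard : ℝ) = k * q := (mul_div_cancel₀ _ hkpos.ne').symm
  have hq : 0 ≤ q := by positivity
  have hcsmall := hsmall c hc
  rw [← hsplit, Nat.cast_add] at hcsmall
  rw [hAq] at hcnear hAZ
  rw [hAZ] at hcfar
  linarith [mul_nonneg (mul_nonneg hy hq) (by linarith : (0 : ℝ) ≤ k - F.card - 1),
    mul_le_mul_of_nonneg_left hZ hy, mul_nonneg hq (by linarith : (0 : ℝ) ≤ k * x + y - 1)]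

end Tripartite

theorem stmt_9 (k : ℕ) (hk : 1 ≤ k) (x y : ℝ)
    (hx : x ∈ Set.Ioc (0:ℝ) 1) (hy : y ∈ Set.Ioc (0:ℝ) 1)
    (h1 : 1 < x + k * y) (h2 : 1 ≤ (k : ℝ) * x + y)
    {V : Type} [Fintype V] (G : SimpleGraph V) (A B C : Set V)
    (hG : Biconstrained G x y A B C) :
    ∃ v ∈ C, (A.ncard : ℝ) / k ≤ (n2card G v A : ℝ) := by
  obtain ⟨⟨⟨-, hB, hC, -, hAC, -, -, -, -, -⟩, hAB, hBC, hnoAC⟩, hBA, hCB⟩ := hG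
  have hAB' (a : V) (ha : a ∈ A) : (B ∩ G.neighborSet a).Nonempty :=
    nonempty_of_mul_ncard_le hx.1 hB (hAB a ha)
  have hCB' (c : V) (hc : c ∈ C) : (B ∩ G.neighborSet c).Nonempty :=
    nonempty_of_mul_ncard_le hy.1 hB (hCB c hc)
  rcases exists_pairwiseDisjoint_card_eq_or_forall_exists_inter_nonempty _ hCB' k with
    ⟨F, hFC, rfl, hF⟩ | ⟨F, hFC, hFk, hdom⟩
  · have hcover := subset_biUnion_N2_of_pairwiseDisjoint hAC hnoAC hB hAB hCB hFC hF h1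
    obtain ⟨c, hcF, hc⟩ :=
      exists_div_card_le_ncard_inter_of_subset_biUnion (Finset.card_pos.1 hk) hcover
    exact ⟨c, hFC hcF, hc⟩
  · exact exists_div_le_n2card_of_forall_exists_inter_nonempty hy.1.le h2 hAC hnoAC hC hAB' hBA
      hBC hFC hFk hdom
end

section
/- Let x, y ∈ (0,1]. If x + y > 1, or if x + y = 1 and x is irrational, then every graph G that is (x,y)-constrained via a tripartition (A,B,C) contains a vertex v ∈ C with N²_A(v) = A. (That is, φ(x,y) = 1.) -/
open Set

/-!
Averaging the edges between `B` and `C` gives a vertex `v ∈ C` with at least `y|B|` neighbours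
in `B`. A vertex `a ∈ A` outside `N²(v)` is not adjacent to `v` (there are no `A`–`C` edges), so
it has no common neighbour with `v`, and `v` has at most `(1 - x)|B|` neighbours in `B`. This
contradicts `x + y > 1`; if `x + y = 1`, equality would make `x = 1 - |N_B(v)|/|B|` rational.
-/

variable {V : Type*} (G : SimpleGraph V)

lemma nbrCard_coe_finset [DecidableRel G.Adj] (s : Finset V) (v : V) :
    nbrCard G v s = (s.filter (G.Adj v)).card := by
  rw [nbrCard, ← Set.ncard_coe_finset]
  congr 1
  ext b
  simp

lemma sum_nbrCard_comm (s t : Finset V) :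
    ∑ v ∈ t, nbrCard G v s = ∑ b ∈ s, nbrCard G b t := by
  classical
  simp only [nbrCard_coe_finset, Finset.card_filter]
  rw [Finset.sum_comm]
  simp only [G.adj_comm]

lemma exists_mul_ncard_le_nbrCard {S T : Set V} (hS : S.Finite) (hT : T.Finite)
    (hTne : T.Nonempty) {y : ℝ} (h : ∀ b ∈ S, y * T.ncard ≤ nbrCard G b T) :
    ∃ v ∈ T, y * S.ncard ≤ nbrCard G v S := by
  lift S to Finset V using hS
  lift T to Finset V using hT
  by_contra! hlt
  simp only [Set.ncard_coe_finset, Finset.mem_coe] at h hlt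
  have hsum : ((∑ v ∈ T, nbrCard G v S : ℕ) : ℝ) = ∑ b ∈ S, (nbrCard G b T : ℝ) := by
    rw [sum_nbrCard_comm, Nat.cast_sum]
  have := calc (S.card : ℝ) * (y * T.card)
      = ∑ _b ∈ S, y * T.card := by rw [Finset.sum_const, nsmul_eq_mul]
    _ ≤ ∑ b ∈ S, (nbrCard G b T : ℝ) := Finset.sum_le_sum h
    _ = ∑ v ∈ T, (nbrCard G v S : ℝ) := by rw [← hsum, Nat.cast_sum]
    _ < ∑ _v ∈ T, y * S.card := Finset.sum_lt_sum_of_nonempty (by simpa using hTne) hlt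
    _ = T.card * (y * S.card) := by rw [Finset.sum_const, nsmul_eq_mul]
  linarith

lemma nbrCard_add_nbrCard_le {B : Set V} (hB : B.Finite) {u v : V}
    (h : ∀ w, G.Adj v w → ¬ G.Adj w u) :
    nbrCard G v B + nbrCard G u B ≤ B.ncard := by
  have hdisj : Disjoint (B ∩ G.neighborSet v) (B ∩ G.neighborSet u) :=
    Set.disjoint_left.2 fun w hv hu => h w hv.2 (G.adj_symm hu.2)
  rw [nbrCard, nbrCard, ← Set.ncard_union_eq hdisj (hB.subset inter_subset_left)
    (hB.subset inter_subset_left)]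
  exact Set.ncard_le_ncard (union_subset inter_subset_left inter_subset_left) hB

lemma forall_not_adj_of_notMem_N2 {u v : V} (huv : ¬ G.Adj v u) (hne : v ≠ u)
    (hu : u ∉ N2 G v) : ∀ w, G.Adj v w → ¬ G.Adj w u :=
  fun w hvw hwu => hu ⟨huv, hne, w, hvw, hwu⟩

lemma natCast_lt_mul_of_add_le {x y : ℝ} (h : 1 < x + y ∨ (x + y = 1 ∧ Irrational x))
    {k l n : ℕ} (hn : 0 < n) (hkl : k + l ≤ n) (hl : x * n ≤ l) : (k : ℝ) < y * n := by
  have hn' : (0 : ℝ) < n := by exact_mod_cast hn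
  have hkl' : (k : ℝ) + l ≤ n := by exact_mod_cast hkl
  rcases h with hxy | ⟨hxy, hirr⟩
  · nlinarith
  · refine lt_of_le_of_ne (by nlinarith) fun hk => hirr ⟨1 - k / n, ?_⟩
    push_cast
    field_simp
    nlinarith

theorem stmt_14_general (x y : ℝ)
    (h : 1 < x + y ∨ (x + y = 1 ∧ Irrational x))
    {V : Type} [Fintype V] (G : SimpleGraph V) (A B C : Set V)
    (hG : Constrained G x y A B C) :
    ∃ v ∈ C, N2 G v ∩ A = A := by
  obtain ⟨⟨-, hB, hC, -, hAC, -⟩, hxB, hyC, hnoAC⟩ := hG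
  obtain ⟨v, hvC, hv⟩ := exists_mul_ncard_le_nbrCard G B.toFinite C.toFinite hC hyC
  refine ⟨v, hvC, Set.inter_eq_right.2 fun a ha => ?_⟩
  by_contra haN2
  have hcommon := forall_not_adj_of_notMem_N2 G (fun hva => hnoAC a ha v hvC hva.symm)
    (hAC.ne_of_mem ha hvC).symm haN2
  have := natCast_lt_mul_of_add_le h ((ncard_pos B.toFinite).2 hB)
    (nbrCard_add_nbrCard_le G B.toFinite hcommon) (hxB a ha)
  linarith

theorem stmt_14 (x y : ℝ) (hx : x ∈ Set.Ioc (0:ℝ) 1) (hy : y ∈ Set.Ioc (0:ℝ) 1)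
    (h : 1 < x + y ∨ (x + y = 1 ∧ Irrational x))
    {V : Type} [Fintype V] (G : SimpleGraph V) (A B C : Set V)
    (hG : Constrained G x y A B C) :
    ∃ v ∈ C, N2 G v ∩ A = A :=
  stmt_14_general x y h G A B C hG
end

section
/- Let k > 0 be an integer and let x ∈ (0,1] satisfy (1−x)^k < x. Then every graph G that is (x,x)-constrained via a tripartition (A,B,C) contains a vertex v ∈ C with |N²_A(v)| ≥ |A|/k. (That is, φ(x,x) ≥ 1/k.) -/
open Set

/-!
Pick vertices `c₁, …, c_k ∈ C` greedily: by double counting, among the vertices of `B` not yet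
adjacent to a chosen vertex, some `c ∈ C` is adjacent to at least an `x`-fraction, so after `k`
steps at most `(1 - x)^k |B| < x |B|` vertices of `B` remain uncovered. Every `a ∈ A` has at least
`x |B|` neighbours in `B`, hence a neighbour adjacent to some `cᵢ`; as there are no edges between
`A` and `C`, `a ∈ N²(cᵢ)`. The `k` sets `N²_A(cᵢ)` thus cover `A`, and one of them has at least
`|A| / k` elements.
-/

open Finset

namespace Finset

variable {α β : Type*} (r : α → β → Prop) [∀ a b, Decidable (r a b)] {s : Finset α}
  {t : Finset β} {x : ℝ}

theorem exists_mul_card_le_card_bipartiteBelow_s15 (ht : t.Nonempty)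
    (h : ∀ a ∈ s, x * #t ≤ #(t.bipartiteAbove r a)) :
    ∃ b ∈ t, x * #s ≤ #(s.bipartiteBelow r b) := by
  by_contra! hlt
  have := card_nsmul_lt_card_nsmul_of_le_of_lt r ht h hlt
  simp only [nsmul_eq_mul] at this
  linarith

theorem card_filter_not_le_one_sub_mul {b : β} (hb : x * #s ≤ #(s.bipartiteBelow r b)) :
    (#{a ∈ s | ¬ r a b} : ℝ) ≤ (1 - x) * #s := by
  have hsplit := card_filter_add_card_filter_not (s := s) (p := fun a ↦ r a b)
  rw [← bipartiteBelow] at hsplit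
  have : (#(s.bipartiteBelow r b) : ℝ) + #{a ∈ s | ¬ r a b} = #s := by exact_mod_cast hsplit
  linarith

theorem exists_subset_card_filter_forall_not_le [DecidableEq β] (hx : x ≤ 1) (ht : t.Nonempty)
    (h : ∀ a ∈ s, x * #t ≤ #(t.bipartiteAbove r a)) (n : ℕ) :
    ∃ u ⊆ t, #u ≤ n ∧ (#{a ∈ s | ∀ b ∈ u, ¬ r a b} : ℝ) ≤ (1 - x) ^ n * #s := by
  induction n with
  | zero => exact ⟨∅, empty_subset t, le_rfl, by simp⟩
  | succ n ih =>
    obtain ⟨u, hut, hun, hu⟩ := ih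
    set U := {a ∈ s | ∀ b ∈ u, ¬ r a b}
    obtain ⟨b, hbt, hb⟩ := exists_mul_card_le_card_bipartiteBelow_s15 r (s := U) ht
      fun a ha ↦ h a (mem_filter.1 ha).1
    have hinsert : {a ∈ s | ∀ b' ∈ insert b u, ¬ r a b'} = {a ∈ U | ¬ r a b} := by
      ext a
      simp only [U, mem_filter, forall_mem_insert]
      tauto
    refine ⟨insert b u, insert_subset hbt hut, (card_insert_le b u).trans (by omega), ?_⟩
    calc (#{a ∈ s | ∀ b' ∈ insert b u, ¬ r a b'} : ℝ)
        ≤ (1 - x) * #U := hinsert ▸ card_filter_not_le_one_sub_mul r hb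
      _ ≤ (1 - x) * ((1 - x) ^ n * #s) := by gcongr
      _ = (1 - x) ^ (n + 1) * #s := by ring

theorem exists_card_div_le_card_of_subset_biUnion {ι : Type*} [DecidableEq α] {u : Finset ι}
    {f : ι → Finset α} {k : ℕ} (hu : u.Nonempty) (huk : #u ≤ k) (hs : s ⊆ u.biUnion f) :
    ∃ i ∈ u, (#s : ℝ) / k ≤ #(f i) := by
  apply exists_le_of_sum_le hu
  have hk : (0 : ℝ) < k := by exact_mod_cast hu.card_pos.trans_le huk
  calc ∑ _i ∈ u, (#s : ℝ) / k = #u * #s / k := by rw [sum_const, nsmul_eq_mul, mul_div_assoc]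
    _ ≤ #s := by
      rw [div_le_iff₀ hk, mul_comm]
      gcongr
    _ ≤ ∑ i ∈ u, (#(f i) : ℝ) := by exact_mod_cast (card_le_card hs).trans card_biUnion_le

end Finset

variable {V : Type*} {G : SimpleGraph V} {x y : ℝ} {A B C : Set V}

theorem nbrCard_eq_card_bipartiteAbove [DecidableRel G.Adj] (v : V) (S : Set V) [Fintype S] :
    nbrCard G v S = #(S.toFinset.bipartiteAbove G.Adj v) := by
  rw [nbrCard, ← Set.ncard_coe_finset]
  congr 1
  ext w
  simp [SimpleGraph.mem_neighborSet]

theorem Constrained.exists_mem_N2 (hG : Constrained G x y A B C) [Fintype B] [DecidableRel G.Adj]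
    {u : Finset V} (huC : ↑u ⊆ C)
    (hu : (#{b ∈ B.toFinset | ∀ c ∈ u, ¬ G.Adj b c} : ℝ) < x * #B.toFinset) {a : V} (ha : a ∈ A) :
    ∃ c ∈ u, a ∈ N2 G c := by
  obtain ⟨⟨-, -, -, -, hAC, -⟩, hdegA, -, hnoAC⟩ := hG
  have hdeg := hdegA a ha
  rw [nbrCard_eq_card_bipartiteAbove, Set.ncard_eq_toFinset_card'] at hdeg
  have hlt : #{b ∈ B.toFinset | ∀ c ∈ u, ¬ G.Adj b c} < #(B.toFinset.bipartiteAbove G.Adj a) := by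
    exact_mod_cast hu.trans_le hdeg
  obtain ⟨b, hab, hbu⟩ := exists_mem_notMem_of_card_lt_card hlt
  rw [mem_bipartiteAbove] at hab
  obtain ⟨c, hcu, hbc⟩ : ∃ c ∈ u, G.Adj b c := by simpa [hab.1] using hbu
  have hcC : c ∈ C := huC hcu
  exact ⟨c, hcu, fun hca ↦ hnoAC a ha c hcC hca.symm, fun hca ↦ hAC.ne_of_mem ha hcC hca.symm,
    b, hbc.symm, hab.2.symm⟩

theorem stmt_15_general (k : ℕ) (x : ℝ) (hx : x ∈ Set.Ioc (0:ℝ) 1)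
    (h : (1 - x) ^ k < x)
    {V : Type} [Fintype V] (G : SimpleGraph V) (A B C : Set V)
    (hG : Constrained G x x A B C) :
    ∃ v ∈ C, (A.ncard : ℝ) / k ≤ (n2card G v A : ℝ) := by
  classical
  obtain ⟨⟨a₀, ha₀⟩, hB, hC, -⟩ := hG.1
  have hdeg : ∀ b ∈ B.toFinset, x * #C.toFinset ≤ #(C.toFinset.bipartiteAbove G.Adj b) := by
    intro b hb
    rw [← nbrCard_eq_card_bipartiteAbove, ← Set.ncard_eq_toFinset_card']
    exact hG.2.2.1 b (Set.mem_toFinset.1 hb)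
  obtain ⟨u, huC, huk, hu⟩ :=
    exists_subset_card_filter_forall_not_le G.Adj hx.2 (Set.toFinset_nonempty.2 hC) hdeg k
  have huC' : ↑u ⊆ C := fun c hc ↦ Set.mem_toFinset.1 (huC hc)
  have hBpos : (0 : ℝ) < #B.toFinset := by exact_mod_cast (Set.toFinset_nonempty.2 hB).card_pos
  have hcov := hu.trans_lt (mul_lt_mul_of_pos_right h hBpos)
  have hN2 : ∀ a ∈ A, ∃ c ∈ u, a ∈ N2 G c := fun a ↦ hG.exists_mem_N2 huC' hcov
  obtain ⟨c₀, hc₀, -⟩ := hN2 a₀ ha₀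
  obtain ⟨c, hcu, hc⟩ := exists_card_div_le_card_of_subset_biUnion (s := A.toFinset)
    (f := fun c ↦ (N2 G c ∩ A).toFinset) ⟨c₀, hc₀⟩ huk fun a ha ↦ by
      obtain ⟨c, hcu, hac⟩ := hN2 a (Set.mem_toFinset.1 ha)
      exact mem_biUnion.2 ⟨c, hcu, Set.mem_toFinset.2 ⟨hac, Set.mem_toFinset.1 ha⟩⟩
  refine ⟨c, huC' hcu, ?_⟩
  rwa [n2card, Set.ncard_eq_toFinset_card', Set.ncard_eq_toFinset_card']

theorem stmt_15 (k : ℕ) (hk : 0 < k) (x : ℝ) (hx : x ∈ Set.Ioc (0:ℝ) 1)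
    (h : (1 - x) ^ k < x)
    {V : Type} [Fintype V] (G : SimpleGraph V) (A B C : Set V)
    (hG : Constrained G x x A B C) :
    ∃ v ∈ C, (A.ncard : ℝ) / k ≤ (n2card G v A : ℝ) :=
  stmt_15_general k x hx h G A B C hG
end

section
/- Let k ≥ 1 be an integer and let x ∈ (0,1] with x ≥ 1/k − 1/(13k³). Then every graph G that is (x,x)-constrained via a tripartition (A,B,C) contains a vertex v ∈ C with |N²_A(v)| ≥ |A|/k. (That is, φ(x,x) ≥ 1/k.) -/
open Set

/-!
Suppose every `c ∈ C` has `|N²_A(c)| < |A|/k`, and put `t = 1/(13k²)`. For `a ∈ A` let `C_a` be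
the set of vertices of `C` joined to `a` by a path through `B`; then `|C_a| ≥ x|C|`, and double
counting shows that fewer than `|A|/k` vertices `a` are rich, i.e. have `|C_a| > (x + t)|C|`. For a
poor `a`, averaging over `c ∈ C_a` gives a `c` with at least `x²|B|/(x + t)` common neighbours with
`a` in `B`.

Now choose `c₁, c₂, …` greedily. While fewer than `k` are chosen they reach fewer than
`(k - 1)|A|/k` vertices of `A`, so some poor `a` is not reached; its neighbours in `B` are not yet
neighbours of any chosen `cᵢ`, and the `c` it provides covers `x²|B|/(x + t)` new vertices of `B`.
After `k` steps fewer than `x|B|` vertices of `B` are uncovered, by the choice of `t`; but `k`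
vertices of `C` cannot reach all of `A`, and an unreached vertex of `A` has `x|B|` uncovered
neighbours.
-/

open Finset
open scoped Classical

section Arithmetic

variable {K x : ℝ}

lemma one_sub_le_mul_of_le (hK : 1 ≤ K) (hx : 1 / K - 1 / (13 * K ^ 3) ≤ x) :
    1 - 1 / (13 * K ^ 2) ≤ K * x := by
  have hK0 : 0 < K := by linarith
  have := mul_le_mul_of_nonneg_left hx hK0.le
  rwa [mul_sub, mul_one_div_cancel hK0.ne',
    show K * (1 / (13 * K ^ 3)) = 1 / (13 * K ^ 2) by field_simp] at this

lemma one_sub_mul_add_lt_mul_sq (hK : 1 ≤ K) (hx : 1 / K - 1 / (13 * K ^ 3) ≤ x) :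
    (1 - x) * (x + 1 / (13 * K ^ 2)) < K * x ^ 2 := by
  have hK0 : 0 < K := by linarith
  have hKx := one_sub_le_mul_of_le hK hx
  set t := 1 / (13 * K ^ 2) with ht
  have htK : 13 * K ^ 2 * t = 1 := by rw [ht]; field_simp
  have ht13 : t ≤ 1 / 13 := one_div_le_one_div_of_le (by norm_num) (by nlinarith)
  have key : K ^ 2 * (K * x ^ 2 - (1 - x) * (x + t))
      = (K * x) ^ 2 - 1 / 13 + K * (K * x) * (K * x - (1 - t)) := by
    linear_combination (-1 / 13 : ℝ) * htK
  have hpos : 0 < K ^ 2 * (K * x ^ 2 - (1 - x) * (x + t)) := by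
    rw [key]
    have : 0 ≤ K * (K * x) * (K * x - (1 - t)) :=
      mul_nonneg (mul_nonneg hK0.le (by linarith)) (by linarith)
    nlinarith
  linarith [pos_of_mul_pos_right hpos (by positivity)]

end Arithmetic

section DoubleCounting

variable {α γ : Type*} {A : Finset α} {C : Finset γ} {P : α → γ → Prop}

lemma card_filter_exists_le_sum (T : Finset γ) :
    #(A.filter (fun a => ∃ c ∈ T, P a c)) ≤ ∑ c ∈ T, #(A.filter (P · c)) := by
  refine (card_le_card fun a ha => ?_).trans card_biUnion_le
  obtain ⟨ha, c, hc, hac⟩ := mem_filter.1 ha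
  exact mem_biUnion.2 ⟨c, hc, mem_filter.2 ⟨ha, hac⟩⟩

variable {κ x t : ℝ}

/-- Counting related pairs both ways, the excesses `#(C.filter (P a)) - x |C|` sum to less than
`(1 - κ x) |A| |C| / κ ≤ t |A| |C| / κ`, and each `a` counted on the left contributes more than
`t |C|`. -/
lemma mul_card_filter_lt_of_mul_card_filter_lt (hκ : 0 ≤ κ) (ht0 : 0 < t) (ht : 1 - κ * x ≤ t)
    (hC : C.Nonempty) (hlow : ∀ a ∈ A, x * #C ≤ #(C.filter (P a)))
    (hsmall : ∀ c ∈ C, κ * #(A.filter (P · c)) < #A) :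
    κ * #(A.filter (fun a => (x + t) * #C < #(C.filter (P a)))) < #A := by
  set excess : α → ℝ := fun a => #(C.filter (P a)) - x * #C
  have hbad : #(A.filter (fun a => (x + t) * #C < #(C.filter (P a)))) * (t * #C)
      ≤ ∑ a ∈ A, excess a := by
    calc #(A.filter (fun a => (x + t) * #C < #(C.filter (P a)))) * (t * #C)
        ≤ ∑ a ∈ A.filter (fun a => (x + t) * #C < #(C.filter (P a))), excess a := by
          rw [← nsmul_eq_mul]
          exact card_nsmul_le_sum _ _ _ fun a ha => by
            have := (mem_filter.1 ha).2
            simp only [excess]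
            linarith
      _ ≤ ∑ a ∈ A, excess a :=
          sum_le_sum_of_subset_of_nonneg (filter_subset _ A) fun a ha _ => by
            simpa [excess] using hlow a ha
  have hsum : κ * ∑ a ∈ A, excess a < #C * #A * t := by
    have hswap : ∑ a ∈ A, (#(C.filter (P a)) : ℝ) = ∑ c ∈ C, (#(A.filter (P · c)) : ℝ) := by
      exact_mod_cast sum_card_bipartiteAbove_eq_sum_card_bipartiteBelow P
    have hlt := sum_lt_sum_of_nonempty hC hsmall
    rw [← mul_sum, ← hswap, sum_const, nsmul_eq_mul] at hlt
    simp only [excess, sum_sub_distrib, sum_const, nsmul_eq_mul]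
    nlinarith [mul_le_mul_of_nonneg_left ht (by positivity : (0 : ℝ) ≤ #C * #A)]
  have hCt : 0 < t * #C := mul_pos ht0 (mod_cast hC.card_pos)
  nlinarith [mul_le_mul_of_nonneg_left hbad hκ]

lemma card_le_mul_card_filter_forall_not {T : Finset γ} (hT : T ⊆ C) (hTκ : #T + 1 ≤ κ)
    (hsmall : ∀ c ∈ C, κ * #(A.filter (P · c)) < #A) :
    #A ≤ κ * #(A.filter (fun a => ∀ c ∈ T, ¬ P a c)) := by
  have hsplit := card_filter_add_card_filter_not (s := A) (fun a => ∃ c ∈ T, P a c)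
  simp only [not_exists, not_and] at hsplit
  have hcov : κ * #(A.filter (fun a => ∃ c ∈ T, P a c)) ≤ #T * #A :=
    calc κ * #(A.filter (fun a => ∃ c ∈ T, P a c))
        ≤ ∑ c ∈ T, κ * #(A.filter (P · c)) := by
          rw [← mul_sum]
          exact mul_le_mul_of_nonneg_left (mod_cast card_filter_exists_le_sum T) (by linarith)
      _ ≤ #T * #A := by
          rw [← nsmul_eq_mul]
          exact sum_le_card_nsmul _ _ _ fun c hc => (hsmall c (hT hc)).le
  have : (#A : ℝ)
      = #(A.filter (fun a => ∃ c ∈ T, P a c)) + #(A.filter (fun a => ∀ c ∈ T, ¬ P a c)) :=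
    mod_cast hsplit.symm
  nlinarith

lemma exists_forall_not_of_card_le {T : Finset γ} (hT : T ⊆ C) (hTκ : #T ≤ κ) (hA : A.Nonempty)
    (hsmall : ∀ c ∈ C, κ * #(A.filter (P · c)) < #A) : ∃ a ∈ A, ∀ c ∈ T, ¬ P a c := by
  by_contra! hcov
  obtain ⟨c₀, hc₀, -⟩ := hcov hA.choose hA.choose_spec
  have hA_le : (#A : ℝ) ≤ ∑ c ∈ T, (#(A.filter (P · c)) : ℝ) := mod_cast
    (Finset.card_le_card fun a ha => mem_filter.2 ⟨ha, hcov a ha⟩).trans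
      (card_filter_exists_le_sum T)
  have hlt := sum_lt_sum_of_nonempty ⟨c₀, hc₀⟩ fun c hc => hsmall c (hT hc)
  rw [← mul_sum, sum_const, nsmul_eq_mul] at hlt
  have hκ : 0 ≤ κ := (Nat.cast_nonneg _).trans hTκ
  nlinarith [mul_le_mul_of_nonneg_left hA_le hκ,
    mul_le_mul_of_nonneg_right hTκ (Nat.cast_nonneg (α := ℝ) #A)]

end DoubleCounting

section PathThrough

variable {α β γ : Type*}

/-- For a graph with no edges between `A` and `C`, `A.filter (PathThrough B G.Adj G.Adj · c)` is
`N²_A(c)`. -/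
def PathThrough (B : Finset β) (r : α → β → Prop) (s : β → γ → Prop) (a : α) (c : γ) : Prop :=
  ∃ b ∈ B, r a b ∧ s b c

variable {B : Finset β} {C : Finset γ} {r : α → β → Prop} {s : β → γ → Prop} {a : α}

lemma filter_subset_filter_pathThrough {b : β} (hb : b ∈ B) (hab : r a b) :
    C.filter (s b) ⊆ C.filter (PathThrough B r s a) := fun _ hc =>
  mem_filter.2 ⟨(mem_filter.1 hc).1, b, hb, hab, (mem_filter.1 hc).2⟩

lemma le_card_filter_pathThrough {y : ℝ} (ha : (B.filter (r a)).Nonempty)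
    (hs : ∀ b ∈ B, y * #C ≤ #(C.filter (s b))) :
    y * #C ≤ #(C.filter (PathThrough B r s a)) := by
  obtain ⟨b, hb⟩ := ha
  rw [mem_filter] at hb
  exact (hs b hb.1).trans (mod_cast card_le_card (filter_subset_filter_pathThrough hb.1 hb.2))

lemma sum_card_filter_filter_pathThrough (a : α) :
    ∑ c ∈ C.filter (PathThrough B r s a), #((B.filter (r a)).filter (s · c))
      = ∑ b ∈ B.filter (r a), #(C.filter (s b)) := by
  calc _ = ∑ b ∈ B.filter (r a), #((C.filter (PathThrough B r s a)).filter (s b)) :=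
        (sum_card_bipartiteAbove_eq_sum_card_bipartiteBelow s).symm
    _ = _ := sum_congr rfl fun b hb => by
        rw [mem_filter] at hb
        rw [filter_filter]
        exact congrArg card <| filter_congr fun c _ =>
          ⟨And.right, fun hbc => ⟨⟨b, hb.1, hb.2, hbc⟩, hbc⟩⟩

/-- Double count the paths `a - b - c` through `B`, then average over `c`. -/
lemma exists_card_mul_le_card_mul_card_filter {y : ℝ}
    (hs : ∀ b ∈ B, y * #C ≤ #(C.filter (s b))) (hne : (C.filter (PathThrough B r s a)).Nonempty) :
    ∃ c ∈ C.filter (PathThrough B r s a), #(B.filter (r a)) * (y * #C)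
      ≤ #(C.filter (PathThrough B r s a)) * #((B.filter (r a)).filter (s · c)) := by
  by_contra! h
  have hlt := sum_lt_sum_of_nonempty hne h
  rw [sum_const, nsmul_eq_mul, ← mul_sum] at hlt
  have hsum : (#(B.filter (r a)) : ℝ) * (y * #C)
      ≤ ∑ c ∈ C.filter (PathThrough B r s a), (#((B.filter (r a)).filter (s · c)) : ℝ) := by
    have hswap : ∑ b ∈ B.filter (r a), (#(C.filter (s b)) : ℝ)
        = ∑ c ∈ C.filter (PathThrough B r s a), (#((B.filter (r a)).filter (s · c)) : ℝ) :=
      mod_cast (sum_card_filter_filter_pathThrough a).symm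
    rw [← hswap, ← nsmul_eq_mul]
    exact card_nsmul_le_sum _ _ _ fun b hb => hs b (mem_filter.1 hb).1
  have hpos : (0 : ℝ) < #(C.filter (PathThrough B r s a)) := mod_cast hne.card_pos
  nlinarith

lemma filter_subset_filter_forall_not {T : Finset γ} (ha : ∀ c ∈ T, ¬ PathThrough B r s a c) :
    B.filter (r a) ⊆ B.filter (fun b => ∀ c ∈ T, ¬ s b c) := fun b hb => by
  rw [mem_filter] at hb ⊢
  exact ⟨hb.1, fun c hc hbc => ha c hc ⟨b, hb.1, hb.2, hbc⟩⟩

lemma card_filter_forall_not_insert_add (c : γ) (T : Finset γ) :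
    #(B.filter (fun b => ∀ c' ∈ insert c T, ¬ s b c'))
      + #((B.filter (fun b => ∀ c' ∈ T, ¬ s b c')).filter (s · c))
      = #(B.filter (fun b => ∀ c' ∈ T, ¬ s b c')) := by
  conv_rhs => rw [← card_filter_add_card_filter_not (s · c)]
  rw [add_comm]
  congr 2
  ext b
  simp only [mem_filter, Finset.forall_mem_insert]
  tauto

lemma exists_mul_card_filter_forall_not_insert_add_le {x t : ℝ} {T : Finset γ} (hx : 0 ≤ x)
    (hra : x * #B ≤ #(B.filter (r a))) (hs : ∀ b ∈ B, x * #C ≤ #(C.filter (s b)))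
    (hne : (C.filter (PathThrough B r s a)).Nonempty)
    (hpoor : #(C.filter (PathThrough B r s a)) ≤ (x + t) * #C)
    (hunc : ∀ c ∈ T, ¬ PathThrough B r s a c) :
    ∃ c ∈ C, (x + t) * #(B.filter (fun b => ∀ c' ∈ insert c T, ¬ s b c')) + x ^ 2 * #B
      ≤ (x + t) * #(B.filter (fun b => ∀ c' ∈ T, ¬ s b c')) := by
  obtain ⟨c, hc, hcommon⟩ := exists_card_mul_le_card_mul_card_filter hs hne
  have hCa : (1 : ℝ) ≤ #(C.filter (PathThrough B r s a)) := mod_cast hne.card_pos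
  have hC : (0 : ℝ) < #C := mod_cast (hne.mono (filter_subset _ _)).card_pos
  have hxt : 0 < x + t := by nlinarith
  have hgain : x ^ 2 * #B ≤ (x + t) * #((B.filter (r a)).filter (s · c)) := by
    have := mul_le_mul_of_nonneg_right hra (mul_nonneg hx hC.le)
    have := mul_le_mul_of_nonneg_right hpoor
      (Nat.cast_nonneg (α := ℝ) #((B.filter (r a)).filter (s · c)))
    nlinarith
  have hsub : (B.filter (r a)).filter (s · c)
      ⊆ (B.filter (fun b => ∀ c' ∈ T, ¬ s b c')).filter (s · c) :=
    filter_subset_filter _ (filter_subset_filter_forall_not hunc)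
  have hsplit : (#(B.filter (fun b => ∀ c' ∈ insert c T, ¬ s b c')) : ℝ)
      + #((B.filter (fun b => ∀ c' ∈ T, ¬ s b c')).filter (s · c))
      = #(B.filter (fun b => ∀ c' ∈ T, ¬ s b c')) := mod_cast card_filter_forall_not_insert_add c T
  have hsub' : (#((B.filter (r a)).filter (s · c)) : ℝ)
      ≤ #((B.filter (fun b => ∀ c' ∈ T, ¬ s b c')).filter (s · c)) := mod_cast card_le_card hsub
  refine ⟨c, (mem_filter.1 hc).1, ?_⟩
  nlinarith

end PathThrough

section Greedy

variable {α β γ : Type*} {A : Finset α} {B : Finset β} {C : Finset γ} {r : α → β → Prop}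
  {s : β → γ → Prop} {k : ℕ} {x t : ℝ}

/-- While fewer than `k` vertices of `C` are chosen, some vertex of `A` is neither reached nor rich,
and the greedy step applies to it. -/
lemma exists_subset_mul_card_filter_forall_not_le (hx : 0 ≤ x)
    (hr : ∀ a ∈ A, x * #B ≤ #(B.filter (r a))) (hs : ∀ b ∈ B, x * #C ≤ #(C.filter (s b)))
    (hreach : ∀ a ∈ A, (C.filter (PathThrough B r s a)).Nonempty)
    (hsmall : ∀ c ∈ C, (k : ℝ) * #(A.filter (PathThrough B r s · c)) < #A)
    (hrich : (k : ℝ) * #(A.filter (fun a => (x + t) * #C < #(C.filter (PathThrough B r s a))))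
      < #A) :
    ∀ i ≤ k, ∃ T ⊆ C, #T ≤ i ∧
      i * x ^ 2 * #B + (x + t) * #(B.filter (fun b => ∀ c ∈ T, ¬ s b c)) ≤ (x + t) * #B := by
  intro i
  induction i with
  | zero => exact fun _ => ⟨∅, empty_subset C, le_rfl, by simp⟩
  | succ i ih =>
    intro hik
    obtain ⟨T, hTC, hTi, hT⟩ := ih (Nat.le_of_succ_le hik)
    have huncov := card_le_mul_card_filter_forall_not hTC (by exact_mod_cast by omega) hsmall
    obtain ⟨a, hunc, hpoor⟩ := exists_mem_notMem_of_card_lt_card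
      (s := A.filter (fun a => (x + t) * #C < #(C.filter (PathThrough B r s a))))
      (t := A.filter (fun a => ∀ c ∈ T, ¬ PathThrough B r s a c))
      (by exact_mod_cast lt_of_mul_lt_mul_left (hrich.trans_le huncov) (Nat.cast_nonneg k))
    obtain ⟨ha, hunc⟩ := mem_filter.1 hunc
    obtain ⟨c, hc, hstep⟩ := exists_mul_card_filter_forall_not_insert_add_le hx (hr a ha) hs
      (hreach a ha) (le_of_not_gt fun h => hpoor (mem_filter.2 ⟨ha, h⟩)) hunc
    refine ⟨insert c T, insert_subset hc hTC, (card_insert_le c T).trans (by omega), ?_⟩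
    push_cast
    linarith

end Greedy

theorem exists_card_le_mul_card_filter_pathThrough {α β γ : Type*} {A : Finset α} {B : Finset β}
    {C : Finset γ} {r : α → β → Prop} {s : β → γ → Prop} {k : ℕ} {x : ℝ} (hk : 1 ≤ k)
    (hx : 1 / (k : ℝ) - 1 / (13 * (k : ℝ) ^ 3) ≤ x) (hB : B.Nonempty) (hC : C.Nonempty)
    (hr : ∀ a ∈ A, x * #B ≤ #(B.filter (r a))) (hs : ∀ b ∈ B, x * #C ≤ #(C.filter (s b))) :
    ∃ c ∈ C, #A ≤ k * #(A.filter (PathThrough B r s · c)) := by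
  by_contra! hsmall
  have hsmall' : ∀ c ∈ C, (k : ℝ) * #(A.filter (PathThrough B r s · c)) < #A :=
    fun c hc => mod_cast hsmall c hc
  have hk' : (1 : ℝ) ≤ k := mod_cast hk
  -- `t` is large enough for `1 - k x ≤ t` and small enough for `one_sub_mul_add_lt_mul_sq`.
  set t : ℝ := 1 / (13 * (k : ℝ) ^ 2) with ht
  have hkx : 1 - t ≤ k * x := one_sub_le_mul_of_le hk' hx
  have ht0 : 0 < t := by positivity
  have hx0 : 0 < x := by
    have : t < 1 := by rw [ht, div_lt_one (by positivity)]; nlinarith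
    nlinarith
  have hB' : (0 : ℝ) < #B := mod_cast hB.card_pos
  have hC' : (0 : ℝ) < #C := mod_cast hC.card_pos
  have hlow : ∀ a ∈ A, x * #C ≤ #(C.filter (PathThrough B r s a)) := fun a ha =>
    le_card_filter_pathThrough (card_pos.1 (mod_cast (mul_pos hx0 hB').trans_le (hr a ha))) hs
  have hreach : ∀ a ∈ A, (C.filter (PathThrough B r s a)).Nonempty := fun a ha =>
    card_pos.1 (mod_cast (mul_pos hx0 hC').trans_le (hlow a ha))
  have hrich := mul_card_filter_lt_of_mul_card_filter_lt (Nat.cast_nonneg k) ht0 (by linarith) hC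
    hlow hsmall'
  obtain ⟨T, hTC, hTk, hT⟩ :=
    exists_subset_mul_card_filter_forall_not_le hx0.le hr hs hreach hsmall' hrich k le_rfl
  have hA : A.Nonempty := card_pos.1 (by obtain ⟨c, hc⟩ := hC; have := hsmall c hc; omega)
  obtain ⟨a, ha, hunc⟩ := exists_forall_not_of_card_le hTC (mod_cast hTk) hA hsmall'
  have hcover : x * #B ≤ #(B.filter (fun b => ∀ c ∈ T, ¬ s b c)) :=
    (hr a ha).trans (mod_cast card_le_card (filter_subset_filter_forall_not hunc))
  have hgap := one_sub_mul_add_lt_mul_sq hk' hx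
  nlinarith [mul_lt_mul_of_pos_right hgap hB']

section Graph

variable {V : Type*} [Fintype V] (G : SimpleGraph V)

lemma nbrCard_eq_card_filter (v : V) (S : Set V) :
    nbrCard G v S = #(S.toFinset.filter (G.Adj v)) := by
  rw [nbrCard, ← ncard_coe_finset]
  congr 1
  ext u
  simp [SimpleGraph.mem_neighborSet]

variable {G}

lemma card_filter_pathThrough_le_n2card {A C : Set V} (B : Finset V) (hAC : Disjoint A C)
    (hnoAC : ∀ u ∈ A, ∀ v ∈ C, ¬ G.Adj u v) {c : V} (hc : c ∈ C) :
    #(A.toFinset.filter (PathThrough B G.Adj G.Adj · c)) ≤ n2card G c A := by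
  rw [n2card, ← ncard_coe_finset]
  refine ncard_le_ncard (fun a ha => ?_) (toFinite _)
  obtain ⟨ha, b, -, hab, hbc⟩ := mem_filter.1 (mem_coe.1 ha)
  rw [mem_toFinset] at ha
  exact ⟨⟨fun hca => hnoAC a ha c hc hca.symm, fun hca => hAC.ne_of_mem ha hc hca.symm,
    b, hbc.symm, hab.symm⟩, ha⟩

end Graph

theorem stmt_16_general (k : ℕ) (hk : 1 ≤ k) (x : ℝ)
    (h : 1 / (k : ℝ) - 1 / (13 * (k : ℝ) ^ 3) ≤ x)
    {V : Type} [Fintype V] (G : SimpleGraph V) (A B C : Set V)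
    (hG : Constrained G x x A B C) :
    ∃ v ∈ C, (A.ncard : ℝ) / k ≤ (n2card G v A : ℝ) := by
  obtain ⟨⟨-, hB, hC, -, hAC, -⟩, hAB, hBC, hnoAC⟩ := hG
  obtain ⟨c, hc, hcA⟩ := exists_card_le_mul_card_filter_pathThrough (A := A.toFinset)
    (r := G.Adj) (s := G.Adj) hk h (toFinset_nonempty.2 hB) (toFinset_nonempty.2 hC)
    (fun a ha => by
      simpa [nbrCard_eq_card_filter, ncard_eq_toFinset_card'] using hAB a (mem_toFinset.1 ha))
    (fun b hb => by
      simpa [nbrCard_eq_card_filter, ncard_eq_toFinset_card'] using hBC b (mem_toFinset.1 hb))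
  rw [mem_toFinset] at hc
  refine ⟨c, hc, ?_⟩
  rw [div_le_iff₀ (by positivity), ncard_eq_toFinset_card', mul_comm]
  exact_mod_cast hcA.trans
    (Nat.mul_le_mul_left k (card_filter_pathThrough_le_n2card _ hAC hnoAC hc))

theorem stmt_16 (k : ℕ) (hk : 1 ≤ k) (x : ℝ) (hx : x ∈ Set.Ioc (0:ℝ) 1)
    (h : 1 / (k : ℝ) - 1 / (13 * (k : ℝ) ^ 3) ≤ x)
    {V : Type} [Fintype V] (G : SimpleGraph V) (A B C : Set V)
    (hG : Constrained G x x A B C) :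
    ∃ v ∈ C, (A.ncard : ℝ) / k ≤ (n2card G v A : ℝ) :=
  stmt_16_general k hk x h G A B C hG
end

section
/- Let x, y, z ∈ (0,1]. Then (x,y,z) is triangular if and only if there is no graph G that is (x,y)-constrained via a tripartition (A,B,C) such that |N²_A(v)| ≤ (1−z)·|A| for every vertex v ∈ C. (Equivalently, φ(x,y) > 1−z if and only if (x,y,z) is triangular.) -/
open Set

/-- The triple `(x,y,z)` is triangular: no triangle-free graph admits a partition of
its vertex set into three nonempty stable sets `(A,B,C)` such that every vertex in `A`
has at least `x|B|` neighbours in `B`, every vertex in `B` has at least `y|C|`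
neighbours in `C`, and every vertex in `C` has at least `z|A|` neighbours in `A`. -/
def Triangular (x y z : ℝ) : Prop :=
  ¬ ∃ (V : Type) (_ : Fintype V) (G : SimpleGraph V) (A B C : Set V),
      G.CliqueFree 3 ∧ IsTripartition G A B C ∧
      (∀ v ∈ A, x * B.ncard ≤ (nbrCard G v B : ℝ)) ∧
      (∀ v ∈ B, y * C.ncard ≤ (nbrCard G v C : ℝ)) ∧
      (∀ v ∈ C, z * A.ncard ≤ (nbrCard G v A : ℝ))

/-!
Deleting the `A`–`C` edges of a triangle-free graph satisfying the three degree conditions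
leaves an `(x,y)`-constrained graph in which, by triangle-freeness, no vertex of `A` at
distance two from `v ∈ C` was a neighbour of `v`; hence `|N²_A(v)| ≤ |A| - z|A|`.
Conversely, join every `v ∈ C` of an `(x,y)`-constrained graph to `A \ N²(v)`. A triangle
must then be `p q r` with `p ∈ A`, `q ∈ B`, `r ∈ C`, where `pq` and `qr` are old edges, so
`p ∈ N²(r)` and `pr` was not added; and `v ∈ C` gains `|A| - |N²_A(v)| ≥ z|A|` neighbours.
-/

variable {V : Type*}

lemma IsTripartition.mem_or_mem_or_mem {G : SimpleGraph V} {A B C : Set V}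
    (h : IsTripartition G A B C) (v : V) : v ∈ A ∨ v ∈ B ∨ v ∈ C := by
  have hv : v ∈ A ∪ B ∪ C := h.2.2.2.2.2.2.1 ▸ mem_univ v
  simpa only [mem_union, or_assoc] using hv

lemma IsTripartition.cliqueFree_three {G : SimpleGraph V} {A B C : Set V}
    (h : IsTripartition G A B C)
    (hABC : ∀ p ∈ A, ∀ q ∈ B, ∀ r ∈ C, G.Adj p q → G.Adj q r → ¬ G.Adj p r) :
    G.CliqueFree 3 := by
  classical
  intro s hs
  obtain ⟨a, b, c, hab, hac, hbc, -⟩ := SimpleGraph.is3Clique_iff.mp hs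
  -- the parts are stable, so a triangle has exactly one vertex in each
  grind [IsTripartition, StableSet, SimpleGraph.Adj.symm, h.mem_or_mem_or_mem]

lemma IsTripartition.of_adj_imp {G H : SimpleGraph V} {A B C : Set V}
    (h : IsTripartition G A B C)
    (hH : ∀ u v, H.Adj u v → G.Adj u v ∨ u ∈ A ∧ v ∈ C ∨ u ∈ C ∧ v ∈ A) :
    IsTripartition H A B C := by
  obtain ⟨hA, hB, hC, hAB, hAC, hBC, hcover, sA, sB, sC⟩ := h
  refine ⟨hA, hB, hC, hAB, hAC, hBC, hcover, ?_, ?_, ?_⟩ <;> intro u hu v hv huv <;>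
    grind [StableSet]

lemma nbrCard_congr {G H : SimpleGraph V} {v : V} {S : Set V}
    (h : ∀ w ∈ S, G.Adj v w ↔ H.Adj v w) : nbrCard G v S = nbrCard H v S := by
  unfold nbrCard
  congr 1
  ext w
  exact and_congr_right (h w)

lemma N2_subset_compl_neighborSet {G H : SimpleGraph V} (hG : G.CliqueFree 3) (hHG : H ≤ G)
    (v : V) : N2 H v ⊆ (G.neighborSet v)ᶜ := by
  classical
  rintro u ⟨-, -, w, hvw, hwu⟩ hvu
  exact hG {v, w, u} (SimpleGraph.is3Clique_triple_iff.mpr ⟨hHG hvw, hvu, hHG hwu⟩)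

lemma n2card_add_nbrCard_le {G H : SimpleGraph V} {A : Set V} (hA : A.Finite)
    (hG : G.CliqueFree 3) (hHG : H ≤ G) (v : V) :
    n2card H v A + nbrCard G v A ≤ A.ncard := by
  have hsub : N2 H v ∩ A ⊆ A \ G.neighborSet v := fun u hu =>
    ⟨hu.2, N2_subset_compl_neighborSet hG hHG v hu.1⟩
  calc n2card H v A + nbrCard G v A
      ≤ (A \ G.neighborSet v).ncard + (A ∩ G.neighborSet v).ncard :=
        Nat.add_le_add_right (ncard_le_ncard hsub hA.sdiff) _
    _ = A.ncard := by rw [add_comm, ncard_inter_add_ncard_sdiff_eq_ncard _ _ hA]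

def deleteEdgesBetween (G : SimpleGraph V) (A C : Set V) : SimpleGraph V :=
  G \ SimpleGraph.fromRel fun a c => a ∈ A ∧ c ∈ C

def addEdgesOutsideN2 (G : SimpleGraph V) (A C : Set V) : SimpleGraph V :=
  G ⊔ SimpleGraph.fromRel fun c a => c ∈ C ∧ a ∈ A ∧ a ∉ N2 G c

section
variable {G : SimpleGraph V} {A B C : Set V}

lemma deleteEdgesBetween_adj {u v : V} : (deleteEdgesBetween G A C).Adj u v ↔
    G.Adj u v ∧ ¬ (u ∈ A ∧ v ∈ C ∨ u ∈ C ∧ v ∈ A) := by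
  simp only [deleteEdgesBetween, SimpleGraph.sdiff_adj, SimpleGraph.fromRel_adj]
  grind [SimpleGraph.Adj.ne]

lemma deleteEdgesBetween_le : deleteEdgesBetween G A C ≤ G := sdiff_le

lemma nbrCard_deleteEdgesBetween {v : V} {S : Set V}
    (h : ∀ w ∈ S, ¬ (v ∈ A ∧ w ∈ C ∨ v ∈ C ∧ w ∈ A)) :
    nbrCard (deleteEdgesBetween G A C) v S = nbrCard G v S :=
  nbrCard_congr fun w hw => by grind [deleteEdgesBetween_adj]

lemma constrained_deleteEdgesBetween {x y : ℝ} (hT : IsTripartition G A B C)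
    (hA : ∀ v ∈ A, x * B.ncard ≤ (nbrCard G v B : ℝ))
    (hB : ∀ v ∈ B, y * C.ncard ≤ (nbrCard G v C : ℝ)) :
    Constrained (deleteEdgesBetween G A C) x y A B C := by
  refine ⟨hT.of_adj_imp fun u v h => Or.inl (deleteEdgesBetween_adj.1 h).1, fun v hv => ?_,
    fun v hv => ?_, fun u hu v hv h => (deleteEdgesBetween_adj.1 h).2 (Or.inl ⟨hu, hv⟩)⟩
  · rw [nbrCard_deleteEdgesBetween fun w hw => by grind [IsTripartition]]
    exact hA v hv
  · rw [nbrCard_deleteEdgesBetween fun w hw => by grind [IsTripartition]]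
    exact hB v hv

lemma addEdgesOutsideN2_adj {u v : V} : (addEdgesOutsideN2 G A C).Adj u v ↔
    G.Adj u v ∨ u ≠ v ∧ (u ∈ C ∧ v ∈ A ∧ v ∉ N2 G u ∨ v ∈ C ∧ u ∈ A ∧ u ∉ N2 G v) := by
  simp only [addEdgesOutsideN2, SimpleGraph.sup_adj, SimpleGraph.fromRel_adj]

lemma nbrCard_addEdgesOutsideN2 {v : V} {S : Set V}
    (h : ∀ w ∈ S, ¬ (v ∈ C ∧ w ∈ A ∨ v ∈ A ∧ w ∈ C)) :
    nbrCard (addEdgesOutsideN2 G A C) v S = nbrCard G v S :=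
  nbrCard_congr fun w hw => by grind [addEdgesOutsideN2_adj]

lemma IsTripartition.addEdgesOutsideN2 (hT : IsTripartition G A B C) :
    IsTripartition (addEdgesOutsideN2 G A C) A B C :=
  hT.of_adj_imp fun u v h => by grind [addEdgesOutsideN2_adj]

lemma cliqueFree_three_addEdgesOutsideN2 (hT : IsTripartition G A B C)
    (hAC : ∀ a ∈ A, ∀ c ∈ C, ¬ G.Adj a c) : (addEdgesOutsideN2 G A C).CliqueFree 3 := by
  refine hT.addEdgesOutsideN2.cliqueFree_three fun p hp q hq r hr hpq hqr hpr => ?_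
  have hGpq : G.Adj p q := by grind [addEdgesOutsideN2_adj, IsTripartition]
  have hGqr : G.Adj q r := by grind [addEdgesOutsideN2_adj, IsTripartition]
  have hpN2 : p ∈ N2 G r := ⟨fun h => hAC p hp r hr h.symm, hpr.ne.symm, q, hGqr.symm, hGpq.symm⟩
  grind [addEdgesOutsideN2_adj, IsTripartition]

lemma nbrCard_addEdgesOutsideN2_add_n2card (hT : IsTripartition G A B C) (hA : A.Finite)
    (hAC : ∀ a ∈ A, ∀ c ∈ C, ¬ G.Adj a c) {v : V} (hv : v ∈ C) :
    nbrCard (addEdgesOutsideN2 G A C) v A + n2card G v A = A.ncard := by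
  have hnbr : A ∩ (addEdgesOutsideN2 G A C).neighborSet v = A \ N2 G v := by
    ext a
    simp only [mem_inter_iff, SimpleGraph.mem_neighborSet, addEdgesOutsideN2_adj, mem_sdiff]
    grind [SimpleGraph.adj_comm, IsTripartition]
  rw [nbrCard, n2card, hnbr, inter_comm, add_comm, ncard_inter_add_ncard_sdiff_eq_ncard _ _ hA]

end

theorem stmt_19_general (x y z : ℝ) :
    Triangular x y z ↔
      ¬ ∃ (V : Type) (_ : Fintype V) (G : SimpleGraph V) (A B C : Set V),
          Constrained G x y A B C ∧
          ∀ v ∈ C, (n2card G v A : ℝ) ≤ (1 - z) * A.ncard := by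
  refine not_congr ⟨fun ⟨V, _, G, A, B, C, hG, hT, hA, hB, hC⟩ => ?_,
    fun ⟨V, _, G, A, B, C, ⟨hT, hA, hB, hAC⟩, hN2⟩ => ?_⟩
  · refine ⟨V, inferInstance, deleteEdgesBetween G A C, A, B, C,
      constrained_deleteEdgesBetween hT hA hB, fun v hv => ?_⟩
    have hcount : n2card (deleteEdgesBetween G A C) v A + nbrCard G v A ≤ A.ncard :=
      n2card_add_nbrCard_le A.toFinite hG deleteEdgesBetween_le v
    have := hC v hv
    rw [← Nat.cast_le (α := ℝ), Nat.cast_add] at hcount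
    linarith
  · refine ⟨V, inferInstance, addEdgesOutsideN2 G A C, A, B, C,
      cliqueFree_three_addEdgesOutsideN2 hT hAC, hT.addEdgesOutsideN2,
      fun v hv => ?_, fun v hv => ?_, fun v hv => ?_⟩
    · rw [nbrCard_addEdgesOutsideN2 fun w hw => by grind [IsTripartition]]
      exact hA v hv
    · rw [nbrCard_addEdgesOutsideN2 fun w hw => by grind [IsTripartition]]
      exact hB v hv
    · have hcount := nbrCard_addEdgesOutsideN2_add_n2card hT A.toFinite hAC hv
      have := hN2 v hv
      rw [← Nat.cast_inj (R := ℝ), Nat.cast_add] at hcount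
      linarith

theorem stmt_19 (x y z : ℝ) (hx : x ∈ Set.Ioc (0:ℝ) 1) (hy : y ∈ Set.Ioc (0:ℝ) 1)
    (hz : z ∈ Set.Ioc (0:ℝ) 1) :
    Triangular x y z ↔
      ¬ ∃ (V : Type) (_ : Fintype V) (G : SimpleGraph V) (A B C : Set V),
          Constrained G x y A B C ∧
          ∀ v ∈ C, (n2card G v A : ℝ) ≤ (1 - z) * A.ncard :=
  stmt_19_general x y z
end
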